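/- arXiv:2508.09367 — 11 statements merged into one kernel-verified Lean document; each statement's English description precedes it below -/
import Mathlib

section
/- For every real ε > 0 and every integer n ≥ 1 there is a single-player instance — U = [n], the additive valuation with v({e}) = γ^{n−e} for all e ∈ [n] where γ = 1 + n/ε, budget B = 1, and admissible cost class D = ℝ≥0^n of all additive cost vectors — such that every randomized mechanism M on this instance that is truthful in expectation, individually rational with probability 1, and budget-feasible in expectation admits a cost vector c ∈ D with E_{(S,ρ)∼M(c)}[v(S)] ≤ OPTalg(v,B,c)·(1+ε)/n. -/
/-!
Normalise the cost vector so that item `j` costs exactly `1`: `c j = v / v j`. Then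
`OPTalg = v j`, and the mechanism's expected value at `c j` is `v j` times its expected cost
`t j`, so it suffices to find a `j` with `t j ≤ (1 + ε) / n`. Consecutive vectors differ by the
factor `γ`, `c j = γ⁻¹ • c (j + 1)`, so truthfulness between them together with individual
rationality telescopes to `(1 - γ⁻¹) ∑ j, t j ≤ B = 1`, and `1 - γ⁻¹ = n / (n + ε)` makes the
average of the `t j` at most `(1 + ε) / n`.
-/

open Finset

/-- The algorithmic optimum `OPTalg(v,B,c)`. -/
noncomputable def OPTalg {n : ℕ} (v c : Fin n → ℝ) (B : ℝ) : ℝ :=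
  sSup {x : ℝ | ∃ S : Finset (Fin n), (∑ e ∈ S, c e) ≤ B ∧ x = ∑ e ∈ S, v e}

/-- Expectation of `g` under a finitely-supported distribution `μ` on outcomes
`(S, ρ)` (procured set, payment). -/
noncomputable def fexp {n : ℕ} (μ : (Finset (Fin n) × ℝ) →₀ ℝ)
    (g : Finset (Fin n) × ℝ → ℝ) : ℝ :=
  μ.sum fun x w => w * g x

lemma sum_le_OPTalg {n : ℕ} (v c : Fin n → ℝ) {B : ℝ} {S : Finset (Fin n)}
    (hS : ∑ e ∈ S, c e ≤ B) : ∑ e ∈ S, v e ≤ OPTalg v c B := by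
  refine le_csSup (Set.Finite.bddAbove ?_) ⟨S, hS, rfl⟩
  refine (Set.finite_range fun S : Finset (Fin n) => ∑ e ∈ S, v e).subset ?_
  rintro _ ⟨S, -, rfl⟩
  exact ⟨S, rfl⟩

section Expectation

variable {n : ℕ} {μ : (Finset (Fin n) × ℝ) →₀ ℝ}

lemma fexp_sub (f g : Finset (Fin n) × ℝ → ℝ) :
    fexp μ (fun x => f x - g x) = fexp μ f - fexp μ g := by
  simp only [fexp, Finsupp.sum, mul_sub, sum_sub_distrib]

lemma fexp_sum_smul (a : ℝ) (d : Fin n → ℝ) :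
    fexp μ (fun x => ∑ e ∈ x.1, (a • d) e) = a * fexp μ (fun x => ∑ e ∈ x.1, d e) := by
  simp only [fexp, Finsupp.sum, Pi.smul_apply, smul_eq_mul, ← mul_sum, mul_left_comm]

lemma fexp_mono (hμ : ∀ x, 0 ≤ μ x) {f g : Finset (Fin n) × ℝ → ℝ}
    (h : ∀ x ∈ μ.support, f x ≤ g x) : fexp μ f ≤ fexp μ g :=
  sum_le_sum fun x hx => mul_le_mul_of_nonneg_left (h x hx) (hμ x)

lemma fexp_nonneg (hμ : ∀ x, 0 ≤ μ x) {f : Finset (Fin n) × ℝ → ℝ} (hf : ∀ x, 0 ≤ f x) :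
    0 ≤ fexp μ f :=
  sum_nonneg fun x _ => mul_nonneg (hμ x) (hf x)

end Expectation

section Mechanism

variable {n : ℕ} (M : (Fin n → ℝ) → ((Finset (Fin n) × ℝ) →₀ ℝ))

def IndividuallyRational : Prop :=
  ∀ c : Fin n → ℝ, (∀ e, 0 ≤ c e) → ∀ x ∈ (M c).support, ∑ e ∈ x.1, c e ≤ x.2

def TruthfulInExpectation : Prop :=
  ∀ cbar c : Fin n → ℝ, (∀ e, 0 ≤ cbar e) → (∀ e, 0 ≤ c e) →
    fexp (M c) (fun x => x.2 - ∑ e ∈ x.1, cbar e) ≤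
      fexp (M cbar) (fun x => x.2 - ∑ e ∈ x.1, cbar e)

def BudgetFeasibleInExpectation (B : ℝ) : Prop :=
  ∀ c : Fin n → ℝ, (∀ e, 0 ≤ c e) → fexp (M c) (fun x => x.2) ≤ B

end Mechanism

lemma telescope_of_step_le (r : ℝ) (t p : ℕ → ℝ) (m : ℕ)
    (hstep : ∀ j < m, p (j + 1) - r * t (j + 1) ≤ p j - t j) :
    p m - r * t m + (1 - r) * ∑ j ∈ range m, t j ≤ p 0 - r * t 0 := by
  induction m with
  | zero => simp
  | succ m ih =>
    have hlast := hstep m (lt_add_one m)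
    have hprev := ih fun j hj => hstep j (hj.trans (lt_add_one m))
    rw [sum_range_succ]
    linarith

lemma sum_expected_cost_le_of_chain {n : ℕ} {M : (Fin n → ℝ) → ((Finset (Fin n) × ℝ) →₀ ℝ)}
    {B : ℝ} (hμ : ∀ c : Fin n → ℝ, (∀ e, 0 ≤ c e) → ∀ x, 0 ≤ M c x)
    (hIR : IndividuallyRational M) (htruth : TruthfulInExpectation M)
    (hbudget : BudgetFeasibleInExpectation M B) {r : ℝ} (hr : 0 ≤ r) (m : ℕ)
    (c : ℕ → Fin n → ℝ) (hc : ∀ j e, 0 ≤ c j e) (hchain : ∀ j < m, c j = r • c (j + 1)) :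
    (1 - r) * ∑ j ∈ range (m + 1), fexp (M (c j)) (fun x => ∑ e ∈ x.1, c j e) ≤ B := by
  set t : ℕ → ℝ := fun j => fexp (M (c j)) (fun x => ∑ e ∈ x.1, c j e)
  set p : ℕ → ℝ := fun j => fexp (M (c j)) (fun x => x.2)
  have htp : ∀ j, t j ≤ p j := fun j => fexp_mono (hμ _ (hc j)) (hIR _ (hc j))
  have hstep : ∀ j < m, p (j + 1) - r * t (j + 1) ≤ p j - t j := by
    intro j hj
    have h := htruth (c j) (c (j + 1)) (hc j) (hc (j + 1))
    rwa [fexp_sub, fexp_sub, hchain j hj, fexp_sum_smul, ← hchain j hj] at h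
  have ht0 : 0 ≤ t 0 := fexp_nonneg (hμ _ (hc 0)) fun x => sum_nonneg fun e _ => hc 0 e
  have hp0 : p 0 ≤ B := hbudget _ (hc 0)
  have := telescope_of_step_le r t p m hstep
  rw [sum_range_succ]
  linarith [htp m, mul_nonneg hr ht0]

lemma exists_le_of_discounted_sum_le {ε : ℝ} (hε : 0 < ε) {n : ℕ} (hn : 1 ≤ n) (t : ℕ → ℝ)
    (h : (1 - (1 + n / ε)⁻¹) * ∑ j ∈ range n, t j ≤ 1) : ∃ j < n, t j ≤ (1 + ε) / n := by
  have hnpos : (0 : ℝ) < n := by exact_mod_cast hn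
  have hdisc : 1 - (1 + n / ε)⁻¹ = n / (n + ε) := by
    field_simp
    ring
  have hsum : ∑ j ∈ range n, t j ≤ ∑ _j ∈ range n, (1 + ε) / n := by
    rw [hdisc, div_mul_eq_mul_div, div_le_one (by positivity)] at h
    rw [sum_const, card_range, nsmul_eq_mul, mul_div_cancel₀ _ hnpos.ne']
    have : ε ≤ n * ε := le_mul_of_one_le_left hε.le (by exact_mod_cast hn)
    nlinarith
  obtain ⟨j, hj, hle⟩ := exists_le_of_sum_le (nonempty_range_iff.2 (by omega)) hsum
  exact ⟨j, mem_range.1 hj, hle⟩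

/-- For every `ε > 0` and every `n ≥ 1` there is a single-player
instance — `U = [n]`, the additive valuation `v e = γ^(n-e)` with `γ = 1 + n/ε`,
budget `B = 1`, admissible class all nonnegative additive cost vectors — such that
every randomized mechanism that is truthful in expectation, individually rational with
probability 1, and budget-feasible in expectation admits a cost vector `c` with
expected value at most `OPTalg(v,B,c) · (1+ε)/n`. -/
theorem stmt1 (ε : ℝ) (hε : 0 < ε) (n : ℕ) (hn : 1 ≤ n) :
    ∃ (γ : ℝ) (v : Fin n → ℝ) (B : ℝ),
      γ = 1 + n / ε ∧ (∀ e : Fin n, v e = γ ^ (n - 1 - (e : ℕ))) ∧ B = 1 ∧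
      ∀ M : (Fin n → ℝ) → ((Finset (Fin n) × ℝ) →₀ ℝ),
        -- each `M c` is a (finitely supported) probability distribution
        (∀ c : Fin n → ℝ, (∀ e, 0 ≤ c e) →
          (∀ x, 0 ≤ M c x) ∧ (M c).sum (fun _ w => w) = 1) →
        -- individual rationality with probability 1 (payments are nonnegative)
        (∀ c : Fin n → ℝ, (∀ e, 0 ≤ c e) → ∀ x ∈ (M c).support,
          0 ≤ x.2 ∧ (∑ e ∈ x.1, c e) ≤ x.2) →
        -- truthfulness in expectation
        (∀ cbar c : Fin n → ℝ, (∀ e, 0 ≤ cbar e) → (∀ e, 0 ≤ c e) →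
          fexp (M c) (fun x => x.2 - ∑ e ∈ x.1, cbar e) ≤
            fexp (M cbar) (fun x => x.2 - ∑ e ∈ x.1, cbar e)) →
        -- budget feasibility in expectation
        (∀ c : Fin n → ℝ, (∀ e, 0 ≤ c e) → fexp (M c) (fun x => x.2) ≤ B) →
        ∃ c : Fin n → ℝ, (∀ e, 0 ≤ c e) ∧
          fexp (M c) (fun x => ∑ e ∈ x.1, v e) ≤ OPTalg v c B * (1 + ε) / n := by
  set γ : ℝ := 1 + n / ε
  have hγ : 0 < γ := by positivity
  set v : Fin n → ℝ := fun e => γ ^ (n - 1 - (e : ℕ))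
  refine ⟨γ, v, 1, rfl, fun _ => rfl, rfl, fun M hprob hIR htruth hbudget => ?_⟩
  set c : ℕ → Fin n → ℝ := fun j e => v e / γ ^ (n - 1 - j)
  have hc : ∀ j e, 0 ≤ c j e := fun j e => by positivity
  have hchain : ∀ j < n - 1, c j = γ⁻¹ • c (j + 1) := fun j hj => funext fun e => by
    simp only [c, Pi.smul_apply, smul_eq_mul, show n - 1 - j = n - 1 - (j + 1) + 1 by omega]
    field_simp
    ring
  have hsum := sum_expected_cost_le_of_chain (fun c hc => (hprob c hc).1)
    (fun c hc x hx => (hIR c hc x hx).2) htruth hbudget (inv_nonneg.2 hγ.le) (n - 1) c hc hchain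
  rw [Nat.sub_add_cancel hn] at hsum
  obtain ⟨j, hj, hcost⟩ := exists_le_of_discounted_sum_le hε hn _ hsum
  have hv : v = γ ^ (n - 1 - j) • c j := funext fun e => by
    simp only [c, Pi.smul_apply, smul_eq_mul]
    field_simp
  have hOPT : γ ^ (n - 1 - j) ≤ OPTalg v (c j) 1 := by
    simpa [c, v] using sum_le_OPTalg v (c j) (S := {⟨j, hj⟩}) (by simp [c, v, (pow_pos hγ _).ne'])
  refine ⟨c j, hc j, ?_⟩
  calc fexp (M (c j)) (fun x => ∑ e ∈ x.1, v e)
      = γ ^ (n - 1 - j) * fexp (M (c j)) (fun x => ∑ e ∈ x.1, c j e) := by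
        rw [hv, fexp_sum_smul]
    _ ≤ γ ^ (n - 1 - j) * ((1 + ε) / n) := by gcongr
    _ ≤ OPTalg v (c j) 1 * ((1 + ε) / n) := by gcongr
    _ = OPTalg v (c j) 1 * (1 + ε) / n := (mul_div_assoc _ _ _).symm
end

section
/- Consider the single-player instance with U = [n] for an integer n ≥ 1, the additive valuation with v({e}) = 1 for every e ∈ [n], budget B = n, and admissible cost class D = {c ∈ ℝ≥0^n : c_e ≤ B for all e} (the no-overbidding class). Every deterministic mechanism (f, p) on this instance that is truthful, individually rational, and budget-feasible admits a cost vector c ∈ D with v(f(c)) ≤ OPTalg(v,B,c)/n. -/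
open Finset

lemma OPTalg_bddAbove {n : ℕ} (v c : Fin n → ℝ) (B : ℝ) (hv : ∀ e, v e = 1) :
    BddAbove {x : ℝ | ∃ S : Finset (Fin n), (∑ e ∈ S, c e) ≤ B ∧ x = ∑ e ∈ S, v e} := by
  refine ⟨n, ?_⟩
  rintro x ⟨S, -, rfl⟩
  calc (∑ e ∈ S, v e) = (S.card : ℝ) := by simp [hv]
    _ ≤ n := by exact_mod_cast (card_le_card (subset_univ S)).trans_eq (by simp)

/-- On the single-player instance with `U = [n]` (`n ≥ 1`), the additive
valuation `v e = 1`, budget `B = n`, and the no-overbidding admissible cost class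
`D = {c : 0 ≤ c e ≤ B}`, every deterministic truthful, individually rational,
budget-feasible mechanism `(f, p)` admits a cost vector `c ∈ D` with
`v (f c) ≤ OPTalg(v,B,c) / n`. -/
theorem stmt2 (n : ℕ) (hn : 1 ≤ n) (v : Fin n → ℝ) (hv : ∀ e, v e = 1)
    (B : ℝ) (hB : B = n)
    (f : (Fin n → ℝ) → Finset (Fin n)) (p : (Fin n → ℝ) → ℝ)
    -- truthfulness
    (truthful : ∀ cbar c : Fin n → ℝ,
      (∀ e, 0 ≤ cbar e ∧ cbar e ≤ B) → (∀ e, 0 ≤ c e ∧ c e ≤ B) →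
      p c - ∑ e ∈ f c, cbar e ≤ p cbar - ∑ e ∈ f cbar, cbar e)
    -- individual rationality
    (ir : ∀ c : Fin n → ℝ, (∀ e, 0 ≤ c e ∧ c e ≤ B) → ∑ e ∈ f c, c e ≤ p c)
    -- budget feasibility
    (bf : ∀ c : Fin n → ℝ, (∀ e, 0 ≤ c e ∧ c e ≤ B) → p c ≤ B) :
    ∃ c : Fin n → ℝ, (∀ e, 0 ≤ c e ∧ c e ≤ B) ∧
      ∑ e ∈ f c, v e ≤ OPTalg v c B / n := by
  have hnpos : (0:ℝ) < n := by exact_mod_cast hn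
  have hBpos : 0 < B := hB ▸ hnpos
  -- the all-B cost vector
  set cB : Fin n → ℝ := fun _ => B with hcBdef
  have hcBmem : ∀ e, 0 ≤ cB e ∧ cB e ≤ B := fun e => ⟨hBpos.le, le_refl B⟩
  have hIR := ir cB hcBmem
  have hBF := bf cB hcBmem
  have hsum : (∑ e ∈ f cB, cB e) = (f cB).card * B := by
    simp [hcBdef, mul_comm]
  have hcard : (f cB).card ≤ 1 := by
    by_contra h
    push_neg at h
    have h2 : (2:ℝ) ≤ (f cB).card := by exact_mod_cast h
    have : 2 * B ≤ B := by
      calc 2 * B ≤ (f cB).card * B := by nlinarith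
        _ ≤ B := by rw [← hsum]; exact hIR.trans hBF
    nlinarith
  by_cases hempty : f cB = ∅
  · -- the mechanism buys nothing at the all-B vector; OPT is nonnegative
    refine ⟨cB, hcBmem, ?_⟩
    rw [hempty]
    simp only [sum_empty]
    apply div_nonneg _ hnpos.le
    apply Real.sSup_nonneg'
    exact ⟨0, ⟨∅, by simp [hBpos.le]⟩, le_refl 0⟩
  · -- the mechanism buys exactly one item e₀ at price B
    obtain ⟨e₀, he₀⟩ : ∃ e₀, f cB = {e₀} := by
      rcases Finset.card_eq_one.mp (le_antisymm hcard
        (Finset.one_le_card.mpr (Finset.nonempty_of_ne_empty hempty))) with ⟨a, ha⟩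
      exact ⟨a, ha⟩
    have hpB : p cB = B := by
      have : (∑ e ∈ f cB, cB e) = B := by rw [he₀]; simp [hcBdef]
      linarith [this ▸ hIR, hBF]
    -- the probe vector: 0 on e₀, 1 elsewhere
    set cb : Fin n → ℝ := fun e => if e = e₀ then 0 else 1 with hcbdef
    have h1B : (1:ℝ) ≤ B := by rw [hB]; exact_mod_cast hn
    have hcbmem : ∀ e, 0 ≤ cb e ∧ cb e ≤ B := by
      intro e
      by_cases he : e = e₀ <;> simp [hcbdef, he] <;> linarith
    have htr := truthful cb cB hcbmem hcBmem
    have hsum0 : (∑ e ∈ f cB, cb e) = 0 := by rw [he₀]; simp [hcbdef]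
    have hbfcb := bf cb hcbmem
    have hnonneg : 0 ≤ ∑ e ∈ f cb, cb e :=
      Finset.sum_nonneg fun e _ => (hcbmem e).1
    have hzero : (∑ e ∈ f cb, cb e) ≤ 0 := by
      rw [hsum0, hpB] at htr; linarith
    -- hence every bought item has cb-cost 0, i.e. f cb ⊆ {e₀}
    have hsub : f cb ⊆ {e₀} := by
      intro e he
      have hall := (Finset.sum_eq_zero_iff_of_nonneg
        (fun e _ => (hcbmem e).1)).mp (le_antisymm hzero hnonneg) e he
      simp only [Finset.mem_singleton]
      by_contra hne
      simp [hcbdef, hne] at hall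
    refine ⟨cb, hcbmem, ?_⟩
    have hval : (∑ e ∈ f cb, v e) ≤ 1 := by
      calc (∑ e ∈ f cb, v e) = ((f cb).card : ℝ) := by simp [hv]
        _ ≤ 1 := by
            exact_mod_cast (Finset.card_le_card hsub).trans_eq (Finset.card_singleton e₀)
    -- OPT ≥ n, witnessed by the full set
    have hOPT : (n:ℝ) ≤ OPTalg v cb B := by
      apply le_csSup (OPTalg_bddAbove v cb B hv)
      refine ⟨Finset.univ, ?_, by simp [hv]⟩
      calc (∑ e ∈ Finset.univ, cb e) ≤ ∑ e ∈ (Finset.univ : Finset (Fin n)), 1 :=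
            Finset.sum_le_sum fun e _ => by by_cases he : e = e₀ <;> simp [hcbdef, he]
        _ = n := by simp
        _ ≤ B := hB.ge
    calc (∑ e ∈ f cb, v e) ≤ 1 := hval
      _ = (n:ℝ)/n := by field_simp
      _ ≤ OPTalg v cb B / n := by gcongr
end

section
/- Let U be a finite set and v : 2^U → ℝ≥0 an XOS valuation, i.e., for every S ⊆ U there exists a vector w ∈ ℝ^U with Σ_{e∈S} w_e = v(S) and Σ_{e∈T} w_e ≤ v(T) for every T ⊆ S. Then for every S ⊆ U and every partition A_1, …, A_r of U into pairwise disjoint sets covering U, one has Σ_{i=1}^r (v(S) − v(S \ A_i)) ≤ v(S). -/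
open Finset

/-- If `v : 2^U → ℝ≥0` is XOS (every `S` has a supporting additive
valuation), then for every `S ⊆ U` and every partition `A_1, …, A_r` of `U`,
`∑_i (v S − v (S \ A_i)) ≤ v S`. -/
theorem stmt5 {n : ℕ} (v : Finset (Fin n) → ℝ)
    (hvnn : ∀ S, 0 ≤ v S)
    -- XOS: every `S` has a supporting additive valuation
    (hxos : ∀ S : Finset (Fin n), ∃ w : Fin n → ℝ,
      (∑ e ∈ S, w e) = v S ∧ ∀ T ⊆ S, (∑ e ∈ T, w e) ≤ v T)
    (S : Finset (Fin n)) (r : ℕ) (A : Fin r → Finset (Fin n))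
    -- `A_1, …, A_r` is a partition of `U` into pairwise disjoint sets covering `U`
    (hdisj : ∀ i j : Fin r, i ≠ j → Disjoint (A i) (A j))
    (hcover : Finset.univ.biUnion A = (Finset.univ : Finset (Fin n))) :
    ∑ i : Fin r, (v S - v (S \ A i)) ≤ v S := by
  obtain ⟨w, hw1, hw2⟩ := hxos S
  have key : ∀ i : Fin r, v S - v (S \ A i) ≤ ∑ e ∈ S ∩ A i, w e := by
    intro i
    have hsplit : (∑ e ∈ S \ A i, w e) + (∑ e ∈ S ∩ A i, w e) = ∑ e ∈ S, w e := by
      rw [← Finset.sum_union (Finset.sdiff_disjoint.mono_right Finset.inter_subset_right)]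
      congr 1
      rw [Finset.sdiff_union_inter]
    have := hw2 (S \ A i) (Finset.sdiff_subset)
    linarith [hw1 ▸ hsplit]
  calc ∑ i : Fin r, (v S - v (S \ A i)) ≤ ∑ i : Fin r, ∑ e ∈ S ∩ A i, w e :=
        Finset.sum_le_sum fun i _ => key i
    _ = ∑ e ∈ Finset.univ.biUnion (fun i => S ∩ A i), w e := by
        rw [Finset.sum_biUnion]
        intro i _ j _ hij
        exact (hdisj i j hij).mono Finset.inter_subset_right Finset.inter_subset_right
    _ = ∑ e ∈ S, w e := by
        congr 1
        rw [← Finset.inter_biUnion, hcover, Finset.inter_univ]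
    _ = v S := hw1
end

section
/- Let g : 2^U → ℝ≥0 be monotone and subadditive with g(∅) = 0, where U is a finite set partitioned into G_1, …, G_k, and define vbench_g(S) := g(S) − max_{i∈[k]} g(S ∩ G_i). Fix S ⊆ U, draw ω uniformly from {1,2}^{[k]}, and set S_j := S ∩ ⋃_{i : ω(i)=j} G_i for j = 1,2. Let Ω be the event that both g(S_1) ≥ vbench_g(S)/4 and g(S_2) ≥ vbench_g(S)/4. Then (a) Pr[Ω] ≥ 1/2, and (b) Pr[{g(S_2) ≥ g(S)/2 and g(S_2) ≥ g(S_1)} ∩ Ω] ≥ 1/4. -/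
open Finset
open scoped Classical

/-- The items owned by the players given label `j` by the labeling `ω`. -/
def sideSet {n k : ℕ} (G : Fin k → Finset (Fin n)) (ω : Fin k → Fin 2) (j : Fin 2) :
    Finset (Fin n) :=
  (Finset.univ.filter fun i => ω i = j).biUnion G

/-- Probability of an event under the uniform distribution on labelings
`ω : [k] → {1,2}`. -/
noncomputable def prOmega (k : ℕ) (P : (Fin k → Fin 2) → Prop) : ℝ :=
  ((Finset.univ.filter P).card : ℝ) / 2 ^ k

private def fl : Fin 2 → Fin 2 := fun j => if j = 0 then 1 else 0

private lemma flfl : ∀ x : Fin 2, fl (fl x) = x := by decide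

private lemma fin2 : ∀ j : Fin 2, j = 0 ∨ j = 1 := by decide

private def Ppart {n k : ℕ} (G : Fin k → Finset (Fin n)) (S : Finset (Fin n))
    (ω : Fin k → Fin 2) (j : Fin 2) (t : ℕ) : Finset (Fin n) :=
  S ∩ (Finset.univ.filter fun i : Fin k => ω i = j ∧ (i : ℕ) < t).biUnion G

private def Cnd {n k : ℕ} (G : Fin k → Finset (Fin n)) (S : Finset (Fin n))
    (g : Finset (Fin n) → ℝ) (vb : ℝ) (ω : Fin k → Fin 2) (t : ℕ) : Prop :=
  vb / 4 ≤ g (Ppart G S ω 0 t) ∨ vb / 4 ≤ g (Ppart G S ω 1 t)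

private noncomputable def Tstop {n k : ℕ} (G : Fin k → Finset (Fin n)) (S : Finset (Fin n))
    (g : Finset (Fin n) → ℝ) (vb : ℝ) (ω : Fin k → Fin 2) : ℕ :=
  Nat.find (p := fun t => Cnd G S g vb ω t ∨ t = k) ⟨k, Or.inr rfl⟩

private noncomputable def phi {n k : ℕ} (G : Fin k → Finset (Fin n)) (S : Finset (Fin n))
    (g : Finset (Fin n) → ℝ) (vb : ℝ) (ω : Fin k → Fin 2) : Fin k → Fin 2 :=
  fun i => if (i : ℕ) < Tstop G S g vb ω then ω i else fl (ω i)

private lemma Ppart_congr {n k : ℕ} (G : Fin k → Finset (Fin n)) (S : Finset (Fin n))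
    {ω ω' : Fin k → Fin 2} {t : ℕ} (h : ∀ i : Fin k, (i : ℕ) < t → ω i = ω' i) (j : Fin 2) :
    Ppart G S ω j t = Ppart G S ω' j t := by
  unfold Ppart
  have : (Finset.univ.filter fun i : Fin k => ω i = j ∧ (i : ℕ) < t)
      = (Finset.univ.filter fun i : Fin k => ω' i = j ∧ (i : ℕ) < t) := by
    apply filter_congr
    intro i _
    constructor
    · rintro ⟨h1, h2⟩; rw [← h i h2]; exact ⟨h1, h2⟩
    · rintro ⟨h1, h2⟩; rw [h i h2]; exact ⟨h1, h2⟩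
  rw [this]

private lemma Cnd_congr {n k : ℕ} (G : Fin k → Finset (Fin n)) (S : Finset (Fin n))
    (g : Finset (Fin n) → ℝ) (vb : ℝ) {ω ω' : Fin k → Fin 2} {t : ℕ}
    (h : ∀ i : Fin k, (i : ℕ) < t → ω i = ω' i) :
    Cnd G S g vb ω t ↔ Cnd G S g vb ω' t := by
  unfold Cnd
  rw [Ppart_congr G S h 0, Ppart_congr G S h 1]

private lemma phi_agree_below {n k : ℕ} (G : Fin k → Finset (Fin n)) (S : Finset (Fin n))
    (g : Finset (Fin n) → ℝ) (vb : ℝ) (ω : Fin k → Fin 2) :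
    ∀ i : Fin k, (i : ℕ) < Tstop G S g vb ω → ω i = phi G S g vb ω i := by
  intro i hi
  unfold phi
  rw [if_pos hi]

private lemma Tstop_le {n k : ℕ} (G : Fin k → Finset (Fin n)) (S : Finset (Fin n))
    (g : Finset (Fin n) → ℝ) (vb : ℝ) (ω : Fin k → Fin 2) : Tstop G S g vb ω ≤ k := by
  unfold Tstop
  exact Nat.find_le (Or.inr rfl)

private lemma Tstop_spec {n k : ℕ} (G : Fin k → Finset (Fin n)) (S : Finset (Fin n))
    (g : Finset (Fin n) → ℝ) (vb : ℝ) (ω : Fin k → Fin 2) :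
    Cnd G S g vb ω (Tstop G S g vb ω) ∨ Tstop G S g vb ω = k := by
  unfold Tstop
  exact Nat.find_spec (p := fun t => Cnd G S g vb ω t ∨ t = k) ⟨k, Or.inr rfl⟩

private lemma Tstop_min {n k : ℕ} (G : Fin k → Finset (Fin n)) (S : Finset (Fin n))
    (g : Finset (Fin n) → ℝ) (vb : ℝ) (ω : Fin k → Fin 2) {t : ℕ}
    (ht : t < Tstop G S g vb ω) : ¬ Cnd G S g vb ω t ∧ t ≠ k := by
  unfold Tstop at ht
  have h := Nat.find_min (p := fun t => Cnd G S g vb ω t ∨ t = k) ⟨k, Or.inr rfl⟩ ht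
  exact ⟨fun hc => h (Or.inl hc), fun hc => h (Or.inr hc)⟩

private lemma Tstop_le_of {n k : ℕ} (G : Fin k → Finset (Fin n)) (S : Finset (Fin n))
    (g : Finset (Fin n) → ℝ) (vb : ℝ) (ω : Fin k → Fin 2) {t : ℕ}
    (ht : Cnd G S g vb ω t) : Tstop G S g vb ω ≤ t := by
  unfold Tstop
  exact Nat.find_le (Or.inl ht)

private lemma Tstop_phi {n k : ℕ} (G : Fin k → Finset (Fin n)) (S : Finset (Fin n))
    (g : Finset (Fin n) → ℝ) (vb : ℝ) (ω : Fin k → Fin 2) :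
    Tstop G S g vb (phi G S g vb ω) = Tstop G S g vb ω := by
  have hagree : ∀ i : Fin k, (i : ℕ) < Tstop G S g vb ω → ω i = phi G S g vb ω i :=
    phi_agree_below G S g vb ω
  have hle : Tstop G S g vb (phi G S g vb ω) ≤ Tstop G S g vb ω := by
    rcases Tstop_spec G S g vb ω with h | h
    · exact Tstop_le_of G S g vb _ ((Cnd_congr G S g vb hagree).1 h)
    · calc Tstop G S g vb (phi G S g vb ω) ≤ k := Tstop_le G S g vb _
        _ = Tstop G S g vb ω := h.symm
  refine le_antisymm hle ?_
  by_contra hlt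
  push_neg at hlt
  rcases Tstop_spec G S g vb (phi G S g vb ω) with h | h
  · have hagree' : ∀ i : Fin k, (i : ℕ) < Tstop G S g vb (phi G S g vb ω) →
        ω i = phi G S g vb ω i := fun i hi => hagree i (lt_trans hi hlt)
    have hC : Cnd G S g vb ω (Tstop G S g vb (phi G S g vb ω)) :=
      (Cnd_congr G S g vb hagree').2 h
    exact (Tstop_min G S g vb ω hlt).1 hC
  · have := Tstop_le G S g vb ω
    omega

private lemma phi_phi {n k : ℕ} (G : Fin k → Finset (Fin n)) (S : Finset (Fin n))
    (g : Finset (Fin n) → ℝ) (vb : ℝ) (ω : Fin k → Fin 2) :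
    phi G S g vb (phi G S g vb ω) = ω := by
  funext i
  have h1 : phi G S g vb (phi G S g vb ω) i
      = if (i : ℕ) < Tstop G S g vb (phi G S g vb ω) then phi G S g vb ω i
        else fl (phi G S g vb ω i) := rfl
  rw [h1, Tstop_phi]
  by_cases hi : (i : ℕ) < Tstop G S g vb ω
  · rw [if_pos hi]
    exact (phi_agree_below G S g vb ω i hi).symm
  · rw [if_neg hi]
    show fl (if (i : ℕ) < Tstop G S g vb ω then ω i else fl (ω i)) = ω i
    rw [if_neg hi, flfl]

private lemma half_count' {α : Type*} [Fintype α] [DecidableEq α] (F : α → α)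
    (hFF : ∀ a, F (F a) = a) (P : α → Prop) (hP : ∀ a, P a ∨ P (F a))
    (R : α → Prop) [DecidablePred R] (hR : ∀ a, R a ↔ P a) :
    Fintype.card α ≤ 2 * (Finset.univ.filter R).card := by
  classical
  have hsub : (Finset.univ : Finset α) ⊆
      (Finset.univ.filter R) ∪ ((Finset.univ.filter R).image F) := by
    intro a _
    rcases hP a with h | h
    · exact mem_union_left _ (mem_filter.2 ⟨mem_univ _, (hR a).2 h⟩)
    · exact mem_union_right _ (mem_image.2 ⟨F a, mem_filter.2 ⟨mem_univ _, (hR _).2 h⟩, hFF a⟩)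
  have h1 := card_le_card hsub
  have h2 := card_union_le (Finset.univ.filter R) ((Finset.univ.filter R).image F)
  have h3 := card_image_le (s := Finset.univ.filter R) (f := F)
  rw [← card_univ]
  omega

private lemma quarter_count {α : Type*} [Fintype α] [DecidableEq α] (F1 F2 : α → α)
    (hF1 : ∀ a, F1 (F1 a) = a) (hF2 : ∀ a, F2 (F2 a) = a)
    (P Q : α → Prop) (hQ1 : ∀ a, Q a ∨ Q (F1 a)) (hQ2 : ∀ a, Q a → Q (F2 a))
    (hPQ : ∀ a, Q a → P a ∨ P (F2 a))
    (R : α → Prop) [DecidablePred R] (hR : ∀ a, R a ↔ (P a ∧ Q a)) :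
    Fintype.card α ≤ 4 * (Finset.univ.filter R).card := by
  classical
  have hQhalf : Fintype.card α ≤ 2 * (Finset.univ.filter Q).card :=
    half_count' F1 hF1 Q hQ1 Q (fun a => Iff.rfl)
  have hsub : (Finset.univ.filter Q) ⊆
      (Finset.univ.filter R) ∪ ((Finset.univ.filter R).image F2) := by
    intro a ha
    have haQ : Q a := (mem_filter.1 ha).2
    rcases hPQ a haQ with h | h
    · exact mem_union_left _ (mem_filter.2 ⟨mem_univ _, (hR a).2 ⟨h, haQ⟩⟩)
    · exact mem_union_right _ (mem_image.2 ⟨F2 a,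
        mem_filter.2 ⟨mem_univ _, (hR _).2 ⟨h, hQ2 a haQ⟩⟩, hF2 a⟩)
  have h1 := card_le_card hsub
  have h2 := card_union_le (Finset.univ.filter R) ((Finset.univ.filter R).image F2)
  have h3 := card_image_le (s := Finset.univ.filter R) (f := F2)
  omega

private lemma prOmega_ge_of_card {k : ℕ} (P : (Fin k → Fin 2) → Prop) [DecidablePred P]
    {m : ℕ} (hm : 0 < m) (h : 2 ^ k ≤ m * (Finset.univ.filter P).card) :
    1 / (m : ℝ) ≤ prOmega k P := by
  have h2k : (0:ℝ) < 2 ^ k := by positivity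
  have hm' : (0:ℝ) < (m:ℝ) := by exact_mod_cast hm
  have hgoal : 1 / (m:ℝ) ≤ ((Finset.univ.filter P).card : ℝ) / 2 ^ k := by
    rw [div_le_div_iff₀ hm' h2k]
    have h' : ((2:ℝ)) ^ k ≤ (m : ℝ) * ((Finset.univ.filter P).card : ℝ) := by
      exact_mod_cast h
    linarith
  rw [prOmega]
  convert hgoal using 6

/-- random-partitioning lemma. Let `g` be monotone, subadditive and
normalized, `vb = g S − max_i g (S ∩ G_i)`, and let `S_j = S ∩ U_j` for the random
partition `U_1, U_2` induced by a uniform labeling of the players. Then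
(a) `Pr[g S_1 ≥ vb/4 ∧ g S_2 ≥ vb/4] ≥ 1/2`, and
(b) `Pr[g S_2 ≥ g S / 2 ∧ g S_2 ≥ g S_1 ∧ Ω] ≥ 1/4`. -/
theorem stmt6 {n k : ℕ} (hk : 0 < k) (G : Fin k → Finset (Fin n))
    (hdisj : ∀ i j : Fin k, i ≠ j → Disjoint (G i) (G j))
    (hcover : Finset.univ.biUnion G = (Finset.univ : Finset (Fin n)))
    (g : Finset (Fin n) → ℝ) (hg0 : g ∅ = 0) (hgnn : ∀ S, 0 ≤ g S)
    (hmono : ∀ S T : Finset (Fin n), S ⊆ T → g S ≤ g T)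
    (hsub : ∀ S T : Finset (Fin n), g (S ∪ T) ≤ g S + g T)
    (S : Finset (Fin n))
    (vb : ℝ) (hvb : vb = g S - sSup {x : ℝ | ∃ i : Fin k, x = g (S ∩ G i)}) :
    1 / 2 ≤ prOmega k (fun ω =>
        vb / 4 ≤ g (S ∩ sideSet G ω 0) ∧ vb / 4 ≤ g (S ∩ sideSet G ω 1)) ∧
    1 / 4 ≤ prOmega k (fun ω =>
        (g S / 2 ≤ g (S ∩ sideSet G ω 1) ∧ g (S ∩ sideSet G ω 0) ≤ g (S ∩ sideSet G ω 1))
        ∧ (vb / 4 ≤ g (S ∩ sideSet G ω 0) ∧ vb / 4 ≤ g (S ∩ sideSet G ω 1))) := by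
  -- basic facts about M
  set M := sSup {x : ℝ | ∃ i : Fin k, x = g (S ∩ G i)} with hMdef
  have hbdd : BddAbove {x : ℝ | ∃ i : Fin k, x = g (S ∩ G i)} := by
    have hr : {x : ℝ | ∃ i : Fin k, x = g (S ∩ G i)}
        = Set.range (fun i : Fin k => g (S ∩ G i)) := by
      ext x; simp [eq_comm, Set.range]
    rw [hr]
    exact (Set.finite_range _).bddAbove
  have hMi : ∀ i : Fin k, g (S ∩ G i) ≤ M := fun i => le_csSup hbdd ⟨i, rfl⟩
  have hM0 : 0 ≤ M := le_trans (hgnn _) (hMi ⟨0, hk⟩)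
  have hgS : g S = vb + M := by rw [hvb]; ring
  -- every item belongs to some G i
  have hmemG : ∀ x : Fin n, ∃ i, x ∈ G i := by
    intro x
    have hx : x ∈ Finset.univ.biUnion G := by rw [hcover]; exact mem_univ x
    simpa using mem_biUnion.1 hx
  -- membership in sideSet
  have hmemside : ∀ (ω : Fin k → Fin 2) (j : Fin 2) (x : Fin n),
      x ∈ sideSet G ω j ↔ ∃ i, ω i = j ∧ x ∈ G i := by
    intro ω j x
    unfold sideSet
    simp [mem_biUnion, mem_filter]
  -- the two sides cover S
  have hsum : ∀ ω : Fin k → Fin 2,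
      g S ≤ g (S ∩ sideSet G ω 0) + g (S ∩ sideSet G ω 1) := by
    intro ω
    have hcov : S ⊆ (S ∩ sideSet G ω 0) ∪ (S ∩ sideSet G ω 1) := by
      intro x hx
      obtain ⟨i, hi⟩ := hmemG x
      rcases fin2 (ω i) with h | h
      · exact mem_union_left _ (mem_inter.2 ⟨hx, (hmemside ω 0 x).2 ⟨i, h, hi⟩⟩)
      · exact mem_union_right _ (mem_inter.2 ⟨hx, (hmemside ω 1 x).2 ⟨i, h, hi⟩⟩)
    calc g S ≤ g ((S ∩ sideSet G ω 0) ∪ (S ∩ sideSet G ω 1)) := hmono _ _ hcov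
      _ ≤ _ := hsub _ _
  -- cardinality of the full space
  have hcard_univ : (Finset.univ : Finset (Fin k → Fin 2)).card = 2 ^ k := by
    rw [card_univ]
    rw [Fintype.card_fun]
    simp
  -- ------------------- Part (a) counting -------------------
  have hA : ∃ F1 : (Fin k → Fin 2) → (Fin k → Fin 2), (∀ a, F1 (F1 a) = a) ∧
      ∀ ω : Fin k → Fin 2,
        (vb / 4 ≤ g (S ∩ sideSet G ω 0) ∧ vb / 4 ≤ g (S ∩ sideSet G ω 1)) ∨
        (vb / 4 ≤ g (S ∩ sideSet G (F1 ω) 0) ∧ vb / 4 ≤ g (S ∩ sideSet G (F1 ω) 1)) := by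
    by_cases hpos : vb ≤ 0
    · exact ⟨id, fun a => rfl, fun ω =>
        Or.inl ⟨le_trans (by linarith) (hgnn _), le_trans (by linarith) (hgnn _)⟩⟩
    push_neg at hpos
    -- Ppart at time k is the full side
    have hPk : ∀ (ω : Fin k → Fin 2) (j : Fin 2), Ppart G S ω j k = S ∩ sideSet G ω j := by
      intro ω j
      unfold Ppart sideSet
      congr 1
      congr 1
      apply filter_congr
      intro i _
      simp [i.isLt]
    -- the condition holds at time k
    have hCk : ∀ ω : Fin k → Fin 2, Cnd G S g vb ω k := by
      intro ω
      by_contra hc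
      unfold Cnd at hc
      push_neg at hc
      rw [hPk ω 0, hPk ω 1] at hc
      have := hsum ω
      have h0 := hc.1
      have h1 := hc.2
      rw [hgS] at this
      linarith
    -- Ppart at time 0 is empty
    have hP0 : ∀ (ω : Fin k → Fin 2) (j : Fin 2), Ppart G S ω j 0 = ∅ := by
      intro ω j
      unfold Ppart
      ext x
      simp
    -- Ppart is contained in the side
    have hPsub : ∀ (ω : Fin k → Fin 2) (j : Fin 2) (t : ℕ),
        Ppart G S ω j t ⊆ S ∩ sideSet G ω j := by
      intro ω j t x hx
      unfold Ppart at hx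
      simp only [mem_inter, mem_biUnion, mem_filter, mem_univ, true_and] at hx
      obtain ⟨hxS, i, ⟨hij, _⟩, hxG⟩ := hx
      exact mem_inter.2 ⟨hxS, (hmemside ω j x).2 ⟨i, hij, hxG⟩⟩
    -- main pairing step
    have hmain : ∀ ω : Fin k → Fin 2,
        (vb / 4 ≤ g (S ∩ sideSet G ω 0) ∧ vb / 4 ≤ g (S ∩ sideSet G ω 1)) ∨
        (vb / 4 ≤ g (S ∩ sideSet G (phi G S g vb ω) 0) ∧
          vb / 4 ≤ g (S ∩ sideSet G (phi G S g vb ω) 1)) := by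
      intro ω
      by_contra hbad
      rw [not_or] at hbad
      -- set up the stopping time
      have hTk : Tstop G S g vb ω ≤ k := Tstop_le G S g vb ω
      have hT0 : 0 < Tstop G S g vb ω := by
        rcases Nat.eq_zero_or_pos (Tstop G S g vb ω) with h0 | h0
        · exfalso
          rcases Tstop_spec G S g vb ω with hs | hs
          · rw [h0] at hs
            unfold Cnd at hs
            rw [hP0 ω 0, hP0 ω 1, hg0] at hs
            rcases hs with hs | hs <;> linarith
          · omega
        · exact h0
      set T := Tstop G S g vb ω with hTdef
      have hspecT : Cnd G S g vb ω T := by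
        rcases Tstop_spec G S g vb ω with hs | hs
        · exact hs
        · rw [← hTdef] at hs
          rw [hs]
          exact hCk ω
      have hminT : ¬ Cnd G S g vb ω (T - 1) := (Tstop_min G S g vb ω (by omega)).1
      unfold Cnd at hminT
      push_neg at hminT
      -- the crossing player
      set p : Fin k := ⟨T - 1, by omega⟩ with hpdef
      set j0 : Fin 2 := ω p with hj0def
      set j1 : Fin 2 := fl j0 with hj1def
      have hj1ne : j1 ≠ j0 := by
        have hd : ∀ a : Fin 2, fl a ≠ a := by decide
        rw [hj1def]
        exact hd j0
      -- side j1 did not change at step T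
      have f3 : Ppart G S ω j1 T = Ppart G S ω j1 (T - 1) := by
        unfold Ppart
        congr 1
        congr 1
        apply filter_congr
        intro i _
        constructor
        · rintro ⟨h1, h2⟩
          refine ⟨h1, ?_⟩
          rcases Nat.lt_or_ge (i : ℕ) (T - 1) with h | h
          · exact h
          · exfalso
            have hip : i = p := by
              apply Fin.ext
              simp only [hpdef]
              omega
            rw [hip] at h1
            exact hj1ne (h1.symm ▸ rfl)
        · rintro ⟨h1, h2⟩
          exact ⟨h1, by omega⟩
      -- extract: g of Ppart j at T-1 is < vb/4 for both j
      have hsmall : ∀ j : Fin 2, g (Ppart G S ω j (T - 1)) < vb / 4 := by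
        intro j
        rcases fin2 j with h | h <;> rw [h]
        · exact hminT.1
        · exact hminT.2
      have f4 : g (Ppart G S ω j1 T) < vb / 4 := by
        rw [f3]; exact hsmall j1
      -- crossing side value at time T
      have f5 : vb / 4 ≤ g (Ppart G S ω j0 T) := by
        unfold Cnd at hspecT
        rcases fin2 j0 with h | h
        · rw [h]
          rcases hspecT with hs | hs
          · exact hs
          · exfalso
            have : j1 = 1 := by rw [hj1def, h]; decide
            rw [this] at f4
            linarith
        · rw [h]
          rcases hspecT with hs | hs
          · exfalso
            have : j1 = 0 := by rw [hj1def, h]; decide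
            rw [this] at f4
            linarith
          · exact hs
      -- upper bound on the crossing side
      have f6 : Ppart G S ω j0 T ⊆ Ppart G S ω j0 (T - 1) ∪ (S ∩ G p) := by
        intro x hx
        unfold Ppart at hx ⊢
        simp only [mem_inter, mem_biUnion, mem_filter, mem_univ, true_and, mem_union] at hx ⊢
        obtain ⟨hxS, i, ⟨hij, hit⟩, hxG⟩ := hx
        rcases Nat.lt_or_ge (i : ℕ) (T - 1) with h | h
        · exact Or.inl ⟨hxS, i, ⟨hij, h⟩, hxG⟩
        · have hip : i = p := by
            apply Fin.ext
            simp only [hpdef]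
            omega
          exact Or.inr ⟨hxS, hip ▸ hxG⟩
      have f7 : g (Ppart G S ω j0 T) < vb / 4 + M := by
        calc g (Ppart G S ω j0 T)
            ≤ g (Ppart G S ω j0 (T - 1) ∪ (S ∩ G p)) := hmono _ _ f6
          _ ≤ g (Ppart G S ω j0 (T - 1)) + g (S ∩ G p) := hsub _ _
          _ < vb / 4 + M := by
              have := hsmall j0
              have := hMi p
              linarith
      -- both labelings give a large side j0
      have hPphi : Ppart G S (phi G S g vb ω) j0 T = Ppart G S ω j0 T := by
        symm
        apply Ppart_congr
        intro i hi
        exact phi_agree_below G S g vb ω i (by rw [← hTdef]; exact hi)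
      have h8a : vb / 4 ≤ g (S ∩ sideSet G ω j0) :=
        le_trans f5 (hmono _ _ (hPsub ω j0 T))
      have h8b : vb / 4 ≤ g (S ∩ sideSet G (phi G S g vb ω) j0) := by
        refine le_trans ?_ (hmono _ _ (hPsub (phi G S g vb ω) j0 T))
        rw [hPphi]
        exact f5
      -- badness forces the other side to be small
      have hbadside : ∀ ω' : Fin k → Fin 2,
          ¬ (vb / 4 ≤ g (S ∩ sideSet G ω' 0) ∧ vb / 4 ≤ g (S ∩ sideSet G ω' 1)) →
          vb / 4 ≤ g (S ∩ sideSet G ω' j0) → g (S ∩ sideSet G ω' j1) < vb / 4 := by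
        intro ω' hb hg'
        rcases fin2 j0 with h | h
        · have hj1 : j1 = 1 := by rw [hj1def, h]; decide
          rw [hj1]
          rw [h] at hg'
          by_contra hc
          push_neg at hc
          exact hb ⟨hg', hc⟩
        · have hj1 : j1 = 0 := by rw [hj1def, h]; decide
          rw [hj1]
          rw [h] at hg'
          by_contra hc
          push_neg at hc
          exact hb ⟨hc, hg'⟩
      have hX : g (S ∩ sideSet G ω j1) < vb / 4 := hbadside ω hbad.1 h8a
      have hY : g (S ∩ sideSet G (phi G S g vb ω) j1) < vb / 4 :=
        hbadside (phi G S g vb ω) hbad.2 h8b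
      -- cover S by the three pieces
      have f9 : S ⊆ Ppart G S ω j0 T ∪
          ((S ∩ sideSet G ω j1) ∪ (S ∩ sideSet G (phi G S g vb ω) j1)) := by
        intro x hx
        obtain ⟨i, hi⟩ := hmemG x
        by_cases hωi : ω i = j1
        · exact mem_union_right _ (mem_union_left _
            (mem_inter.2 ⟨hx, (hmemside ω j1 x).2 ⟨i, hωi, hi⟩⟩))
        · have hωj0 : ω i = j0 := by
            have hd : ∀ a b : Fin 2, a ≠ fl b → a = b := by decide
            exact hd (ω i) j0 (by rw [← hj1def]; exact hωi)
          by_cases ht : (i : ℕ) < T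
          · apply mem_union_left
            unfold Ppart
            simp only [mem_inter, mem_biUnion, mem_filter, mem_univ, true_and]
            exact ⟨hx, i, ⟨hωj0, ht⟩, hi⟩
          · have hphii : phi G S g vb ω i = j1 := by
              unfold phi
              rw [← hTdef, if_neg ht, hωj0, hj1def]
            exact mem_union_right _ (mem_union_right _
              (mem_inter.2 ⟨hx, (hmemside (phi G S g vb ω) j1 x).2 ⟨i, hphii, hi⟩⟩))
      -- final contradiction
      have hfinal : g S < vb / 4 + M + (vb / 4 + vb / 4) := by
        calc g S ≤ g (Ppart G S ω j0 T ∪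
            ((S ∩ sideSet G ω j1) ∪ (S ∩ sideSet G (phi G S g vb ω) j1))) := hmono _ _ f9
          _ ≤ g (Ppart G S ω j0 T) +
              g ((S ∩ sideSet G ω j1) ∪ (S ∩ sideSet G (phi G S g vb ω) j1)) := hsub _ _
          _ ≤ g (Ppart G S ω j0 T) +
              (g (S ∩ sideSet G ω j1) + g (S ∩ sideSet G (phi G S g vb ω) j1)) := by
                have := hsub (S ∩ sideSet G ω j1) (S ∩ sideSet G (phi G S g vb ω) j1)
                linarith
          _ < vb / 4 + M + (vb / 4 + vb / 4) := by linarith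
      rw [hgS] at hfinal
      linarith
    exact ⟨phi G S g vb, phi_phi G S g vb, hmain⟩
  obtain ⟨F1, hF1F1, hQ1⟩ := hA
  have hcard_fun : Fintype.card (Fin k → Fin 2) = 2 ^ k := by
    rw [Fintype.card_fun]
    simp
  -- ------------------- Part (b) -------------------
  have hFside : ∀ (ω : Fin k → Fin 2) (j : Fin 2),
      sideSet G (fun i => fl (ω i)) j = sideSet G ω (fl j) := by
    intro ω j
    unfold sideSet
    congr 1
    apply filter_congr
    intro i _
    have hd : ∀ a b : Fin 2, fl a = b ↔ a = fl b := by decide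
    exact hd (ω i) j
  have hfl0 : fl 0 = 1 := by decide
  have hfl1 : fl 1 = 0 := by decide
  have hFF : ∀ ω : Fin k → Fin 2, (fun i => fl ((fun i' : Fin k => fl (ω i')) i)) = ω := by
    intro ω
    funext i
    exact flfl (ω i)
  have hQ2 : ∀ ω : Fin k → Fin 2,
      (vb / 4 ≤ g (S ∩ sideSet G ω 0) ∧ vb / 4 ≤ g (S ∩ sideSet G ω 1)) →
      (vb / 4 ≤ g (S ∩ sideSet G (fun i => fl (ω i)) 0) ∧
        vb / 4 ≤ g (S ∩ sideSet G (fun i => fl (ω i)) 1)) := by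
    intro ω hω
    constructor
    · rw [hFside ω 0, hfl0]
      exact hω.2
    · rw [hFside ω 1, hfl1]
      exact hω.1
  have hPQ : ∀ ω : Fin k → Fin 2,
      (g S / 2 ≤ g (S ∩ sideSet G ω 1) ∧ g (S ∩ sideSet G ω 0) ≤ g (S ∩ sideSet G ω 1)) ∨
      (g S / 2 ≤ g (S ∩ sideSet G (fun i => fl (ω i)) 1) ∧
        g (S ∩ sideSet G (fun i => fl (ω i)) 0) ≤ g (S ∩ sideSet G (fun i => fl (ω i)) 1)) := by
    intro ω
    rcases le_or_gt (g (S ∩ sideSet G ω 0)) (g (S ∩ sideSet G ω 1)) with h | h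
    · left
      refine ⟨?_, h⟩
      have := hsum ω
      linarith
    · right
      rw [hFside ω 0, hfl0, hFside ω 1, hfl1]
      refine ⟨?_, le_of_lt h⟩
      have := hsum ω
      linarith
  -- ------------------- conclude -------------------
  constructor
  · have hc := half_count' F1 hF1F1 _ hQ1
      (fun ω : Fin k → Fin 2 =>
        vb / 4 ≤ g (S ∩ sideSet G ω 0) ∧ vb / 4 ≤ g (S ∩ sideSet G ω 1))
      (fun a => Iff.rfl)
    rw [hcard_fun] at hc
    have := prOmega_ge_of_card _ (show 0 < 2 by norm_num) hc
    simpa using this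
  · have hc := quarter_count F1 (fun (ω : Fin k → Fin 2) (i : Fin k) => fl (ω i))
      hF1F1 hFF
      (fun ω : Fin k → Fin 2 =>
        g S / 2 ≤ g (S ∩ sideSet G ω 1) ∧ g (S ∩ sideSet G ω 0) ≤ g (S ∩ sideSet G ω 1))
      (fun ω : Fin k → Fin 2 =>
        vb / 4 ≤ g (S ∩ sideSet G ω 0) ∧ vb / 4 ≤ g (S ∩ sideSet G ω 1))
      hQ1 hQ2 (fun ω _ => hPQ ω)
      (fun ω : Fin k → Fin 2 =>
        (g S / 2 ≤ g (S ∩ sideSet G ω 1) ∧ g (S ∩ sideSet G ω 0) ≤ g (S ∩ sideSet G ω 1))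
        ∧ (vb / 4 ≤ g (S ∩ sideSet G ω 0) ∧ vb / 4 ≤ g (S ∩ sideSet G ω 1)))
      (fun a => Iff.rfl)
    rw [hcard_fun] at hc
    have := prOmega_ge_of_card _ (show 0 < 4 by norm_num) hc
    simpa using this
end

section
/- Let v : 2^U → ℝ≥0 be a monotone, normalized XOS valuation on a finite set U partitioned into G_1, …, G_k, let each player i have a monotone normalized cost function c_i : 2^{G_i} → ℝ≥0, let c(S) := Σ_i c_i(S ∩ G_i), and let B ≥ 0. For A ⊆ U let LP*(A) be the supremum, over weight functions x : 2^A → ℝ≥0 with Σ_{S⊆A} c(S)x_S ≤ B and Σ_{S⊆A} x_S ≤ 1, of Σ_{S⊆A} v(S)x_S; and let LP*_Bench be the supremum, over pairs (x, V) with x : 2^U → ℝ≥0, Σ_S c(S)x_S ≤ B, Σ_S x_S ≤ 1, and Σ_S v(S ∩ G_i)x_S ≤ V for every i ∈ [k], of Σ_S v(S)x_S − V. Draw ω uniformly from {1,2}^{[k]} and set U_j := ⋃_{i : ω(i)=j} G_i. Then with probability at least 1/4 it holds simultaneously that LP*(U_2) ≥ LP*(U_1) ≥ LP*_Bench/4 ≥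 OPT_Bench(v,B,c)/4 and LP*(U_2) ≥ LP*(U)/2. -/
/-!
Fix a feasible point `(x, V)` of the benchmark LP and split every `v S` along a supporting
additive valuation of `S`. This gives each player `i` a share `a i` with `0 ≤ a i ≤ V` and
`∑ i, a i = ∑ S, v S * x S`, and the shares of the players on one side are dominated by a
feasible solution of the LP restricted to that side.

A reflection argument in the style of André's shows that with probability at least `1/2` both
sides receive at least `(∑ i, a i - V) / 4`: flipping all labels after the first time the signed
partial sum `∑ ±a i` leaves `[-L, L]`, `L = (∑ i, a i - V) / 2`, is an involution mapping the
unbalanced labellings injectively into the balanced ones. As there are finitely many labellings,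
this passes to the supremum `LP*_Bench`. Swapping the two labels shows that half of these
labellings also have `LP*(U_1) ≤ LP*(U_2)`. Finally `LP*(U) ≤ LP*(U_1) + LP*(U_2)` since XOS
valuations are subadditive, and `OPT_Bench ≤ LP*_Bench` via integral solutions.
-/

open Finset
open scoped Classical

/-- `LP*(A)`: the optimal value of the LP-relaxation BFLP(A) of the budget-feasible
procurement problem restricted to `A`. -/
noncomputable def LPstar {n k : ℕ} (G : Fin k → Finset (Fin n))
    (v : Finset (Fin n) → ℝ) (c : Fin k → Finset (Fin n) → ℝ) (B : ℝ)
    (A : Finset (Fin n)) : ℝ :=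
  sSup {t : ℝ | ∃ x : Finset (Fin n) → ℝ, (∀ S, 0 ≤ x S) ∧
    (∑ S ∈ A.powerset, (∑ i, c i (S ∩ G i)) * x S) ≤ B ∧
    (∑ S ∈ A.powerset, x S) ≤ 1 ∧
    t = ∑ S ∈ A.powerset, v S * x S}

/-- `LP*_Bench`: the optimal value of the benchmark LP. -/
noncomputable def LPBench {n k : ℕ} (G : Fin k → Finset (Fin n))
    (v : Finset (Fin n) → ℝ) (c : Fin k → Finset (Fin n) → ℝ) (B : ℝ) : ℝ :=
  sSup {t : ℝ | ∃ (x : Finset (Fin n) → ℝ) (V : ℝ), (∀ S, 0 ≤ x S) ∧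
    (∑ S : Finset (Fin n), (∑ i, c i (S ∩ G i)) * x S) ≤ B ∧
    (∑ S : Finset (Fin n), x S) ≤ 1 ∧
    (∀ i : Fin k, (∑ S : Finset (Fin n), v (S ∩ G i) * x S) ≤ V) ∧
    t = (∑ S : Finset (Fin n), v S * x S) - V}

open Function

section Counting

lemma exists_filter_le_subset_filter_sSup_le {α : Type*} [Fintype α] (f : α → ℝ) {T : Set ℝ}
    (hT : T.Nonempty) :
    ∃ t ∈ T, univ.filter (fun a => t ≤ f a) ⊆ univ.filter (fun a => sSup T ≤ f a) := by
  obtain ⟨t, ht, hlt⟩ : ∃ t ∈ T, ∀ a, f a < sSup T → f a < t := by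
    by_cases hs : (univ.filter fun a => f a < sSup T).Nonempty
    · obtain ⟨a₀, ha₀, hmax⟩ := exists_max_image _ f hs
      obtain ⟨t, ht, hlt⟩ := exists_lt_of_lt_csSup hT (mem_filter.1 ha₀).2
      exact ⟨t, ht, fun a ha => (hmax a (by simp [ha])).trans_lt hlt⟩
    · obtain ⟨t, ht⟩ := hT
      exact ⟨t, ht, fun a ha => absurd ⟨a, by simp [ha]⟩ hs⟩
  refine ⟨t, ht, fun a => ?_⟩
  simp only [mem_filter, mem_univ, true_and]
  exact fun hta => not_lt.1 fun hlt' => (hlt a hlt').not_ge hta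

lemma card_le_two_mul_card_filter {α : Type*} [DecidableEq α] {s : Finset α} {σ : α → α}
    (hσ : Involutive σ) (hs : ∀ a ∈ s, σ a ∈ s) {P : α → Prop} [DecidablePred P]
    (hP : ∀ a ∈ s, P a ∨ P (σ a)) : #s ≤ 2 * #(s.filter P) := by
  have hcover : s ⊆ s.filter P ∪ (s.filter P).image σ := fun a ha => by
    rcases hP a ha with h | h
    · exact mem_union_left _ (mem_filter.2 ⟨ha, h⟩)
    · exact mem_union_right _ (mem_image.2 ⟨σ a, mem_filter.2 ⟨hs a ha, h⟩, hσ a⟩)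
  calc #s ≤ #(s.filter P) + #((s.filter P).image σ) :=
        (card_le_card hcover).trans (card_union_le _ _)
    _ ≤ 2 * #(s.filter P) := by linarith [card_image_le (s := s.filter P) (f := σ)]

lemma sum_inter_biUnion {ι α M : Type*} [DecidableEq α] [AddCommMonoid M] {G : ι → Finset α}
    (hG : Pairwise (Disjoint on G)) (s : Finset ι) (S : Finset α) (f : α → M) :
    ∑ e ∈ S ∩ s.biUnion G, f e = ∑ i ∈ s, ∑ e ∈ S ∩ G i, f e := by
  rw [inter_biUnion, sum_biUnion]
  exact fun i _ j _ hij => (hG hij).mono inter_subset_right inter_subset_right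

end Counting

section XOS

variable {α : Type*} [DecidableEq α] {v : Finset α → ℝ}

lemma le_add_of_disjoint_of_xos
    (hxos : ∀ S : Finset α, ∃ w : α → ℝ, (∑ e ∈ S, w e) = v S ∧ ∀ T ⊆ S, (∑ e ∈ T, w e) ≤ v T)
    {T₁ T₂ : Finset α} (hd : Disjoint T₁ T₂) : v (T₁ ∪ T₂) ≤ v T₁ + v T₂ := by
  obtain ⟨w, hwS, hwT⟩ := hxos (T₁ ∪ T₂)
  rw [← hwS, sum_union hd]
  exact add_le_add (hwT _ subset_union_left) (hwT _ subset_union_right)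

lemma sum_nonneg_of_supporting (hvmono : ∀ S T : Finset α, S ⊆ T → v S ≤ v T) {S T : Finset α}
    {w : α → ℝ} (hw : (∑ e ∈ S, w e) = v S ∧ ∀ T ⊆ S, (∑ e ∈ T, w e) ≤ v T) (hT : T ⊆ S) :
    0 ≤ ∑ e ∈ T, w e := by
  have hsplit := sum_sdiff hT (f := w)
  linarith [hw.2 _ (sdiff_subset : S \ T ⊆ S), hvmono _ _ (sdiff_subset : S \ T ⊆ S)]

end XOS

section SignPatterns

variable {k : ℕ} (a : Fin k → ℝ)

def signedTerm (ω : Fin k → Fin 2) (i : Fin k) : ℝ := if ω i = 0 then a i else -a i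

def prefixSum (ω : Fin k → Fin 2) (m : ℕ) : ℝ := ∑ i : Fin k with i.val < m, signedTerm a ω i

def flipAfter (t : ℕ) (ω : Fin k → Fin 2) : Fin k → Fin 2 :=
  fun i => if i.val ≤ t then ω i else (ω i).rev

lemma abs_signedTerm (ω : Fin k → Fin 2) (i : Fin k) : |signedTerm a ω i| = |a i| := by
  unfold signedTerm; split_ifs <;> simp

lemma flipAfter_flipAfter (t : ℕ) (ω : Fin k → Fin 2) : flipAfter t (flipAfter t ω) = ω := by
  funext i; unfold flipAfter; split_ifs <;> simp

lemma signedTerm_flipAfter (t : ℕ) (ω : Fin k → Fin 2) (i : Fin k) :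
    signedTerm a (flipAfter t ω) i =
      if i.val ≤ t then signedTerm a ω i else -signedTerm a ω i := by
  unfold signedTerm flipAfter
  split_ifs <;> simp_all [Fin.rev_eq_iff]
  omega

lemma prefixSum_flipAfter {t m : ℕ} (hm : m ≤ t + 1) (ω : Fin k → Fin 2) :
    prefixSum a (flipAfter t ω) m = prefixSum a ω m :=
  sum_congr rfl fun i hi => by
    rw [signedTerm_flipAfter, if_pos (by have := (mem_filter.1 hi).2; omega)]

lemma sum_signedTerm_flipAfter (t : ℕ) (ω : Fin k → Fin 2) :
    ∑ i, signedTerm a (flipAfter t ω) i =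
      2 * prefixSum a ω (t + 1) - ∑ i, signedTerm a ω i := by
  simp only [signedTerm_flipAfter, sum_ite, sum_neg_distrib, prefixSum, Nat.lt_succ_iff]
  rw [← sum_filter_add_sum_filter_not univ (fun i : Fin k => i.val ≤ t)]
  ring

lemma prefixSum_zero (ω : Fin k → Fin 2) : prefixSum a ω 0 = 0 := by
  simp [prefixSum]

lemma prefixSum_of_le {m : ℕ} (hm : k ≤ m) (ω : Fin k → Fin 2) :
    prefixSum a ω m = ∑ i, signedTerm a ω i := by
  unfold prefixSum
  rw [filter_true_of_mem fun i _ => by omega]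

lemma prefixSum_succ {m : ℕ} (hm : m < k) (ω : Fin k → Fin 2) :
    prefixSum a ω (m + 1) = prefixSum a ω m + signedTerm a ω ⟨m, hm⟩ := by
  have : univ.filter (fun i : Fin k => i.val < m + 1) =
      insert ⟨m, hm⟩ (univ.filter fun i : Fin k => i.val < m) := by
    ext i; simp only [mem_filter, mem_univ, true_and, mem_insert, Fin.ext_iff]; omega
  rw [prefixSum, this, sum_insert (by simp), add_comm]
  rfl

lemma abs_prefixSum_le (ω : Fin k → Fin 2) (m : ℕ) :
    |prefixSum a ω m| ≤ ∑ i : Fin k with i.val < m, |a i| :=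
  (abs_sum_le_sum_abs _ _).trans_eq (sum_congr rfl fun i _ => abs_signedTerm a ω i)

lemma abs_sum_signedTerm_sub_prefixSum_le (ω : Fin k → Fin 2) (m : ℕ) :
    |∑ i, signedTerm a ω i - prefixSum a ω m| ≤ ∑ i : Fin k with ¬i.val < m, |a i| := by
  rw [prefixSum, ← sum_filter_add_sum_filter_not univ (fun i : Fin k => i.val < m),
    add_sub_cancel_left]
  exact (abs_sum_le_sum_abs _ _).trans_eq (sum_congr rfl fun i _ => abs_signedTerm a ω i)

lemma abs_sum_signedTerm_le (ω : Fin k → Fin 2) : |∑ i, signedTerm a ω i| ≤ ∑ i, |a i| := by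
  simpa [prefixSum_zero] using abs_sum_signedTerm_sub_prefixSum_le a ω 0

lemma filter_ne_zero_eq_filter_eq_one (ω : Fin k → Fin 2) :
    univ.filter (fun i => ¬ω i = 0) = univ.filter (fun i => ω i = 1) :=
  filter_congr fun i _ => by omega

lemma sum_signedTerm_eq_sub (ω : Fin k → Fin 2) :
    ∑ i, signedTerm a ω i = ∑ i with ω i = 0, a i - ∑ i with ω i = 1, a i := by
  rw [sub_eq_add_neg, ← sum_neg_distrib, ← filter_ne_zero_eq_filter_eq_one]
  exact sum_ite _ _

lemma sum_filter_zero_add_sum_filter_one (ω : Fin k → Fin 2) :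
    ∑ i with ω i = 0, a i + ∑ i with ω i = 1, a i = ∑ i, a i := by
  rw [← filter_ne_zero_eq_filter_eq_one]
  exact sum_filter_add_sum_filter_not _ _ _

end SignPatterns

section Reflection

variable {k : ℕ} (a : Fin k → ℝ)

/-- Flip every label after the first index at which the prefix sum leaves `[-L, L]`. -/
noncomputable def reflectAtExit (L : ℝ) (ω : Fin k → Fin 2) : Fin k → Fin 2 :=
  if h : ∃ m < k, L < |prefixSum a ω (m + 1)| then flipAfter (Nat.find h) ω else ω

lemma reflectAtExit_reflectAtExit {L : ℝ} {ω : Fin k → Fin 2}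
    (h : ∃ m < k, L < |prefixSum a ω (m + 1)|) :
    reflectAtExit a L (reflectAtExit a L ω) = ω := by
  have h' : ∃ m < k, L < |prefixSum a (flipAfter (Nat.find h) ω) (m + 1)| := by
    obtain ⟨hk, hL⟩ := Nat.find_spec h
    exact ⟨_, hk, by rwa [prefixSum_flipAfter a le_rfl]⟩
  have hfind : Nat.find h' = Nat.find h := by
    rw [Nat.find_eq_iff]
    refine ⟨?_, fun m hm => ?_⟩
    · rw [prefixSum_flipAfter a le_rfl]; exact Nat.find_spec h
    · rw [prefixSum_flipAfter a (by omega)]; exact Nat.find_min h hm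
  have hflip : reflectAtExit a L ω = flipAfter (Nat.find h) ω := dif_pos h
  rw [hflip, reflectAtExit, dif_pos h', hfind, flipAfter_flipAfter]

lemma exists_exit {V : ℝ} (hV0 : 0 ≤ V) {ω : Fin k → Fin 2}
    (hω : (∑ i, |a i| + V) / 2 < |∑ i, signedTerm a ω i|) :
    ∃ m < k, (∑ i, |a i| - V) / 2 < |prefixSum a ω (m + 1)| := by
  have hk : 0 < k := Nat.pos_of_ne_zero fun hk => by
    subst hk
    simp only [univ_eq_empty, sum_empty, abs_zero, zero_add] at hω
    linarith
  refine ⟨k - 1, by omega, ?_⟩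
  rw [prefixSum_of_le a (by omega)]
  linarith

/-- Here `u` is the prefix sum at the exit time and `D` the total sum; flipping the tail turns
the total into `2 * u - D`. -/
lemma abs_two_mul_sub_le_of_exit {L V u D : ℝ} (hu : L < |u|) (hu' : |u| ≤ L + V)
    (htail : |D - u| ≤ 2 * L + V - |u|) (hD : L + V < |D|) : |2 * u - D| ≤ L + V := by
  rcases abs_cases u with ⟨hu1, _⟩ | ⟨hu1, _⟩ <;> rcases abs_cases D with ⟨hD1, _⟩ | ⟨hD1, _⟩ <;>
    rcases abs_cases (D - u) with ⟨h1, _⟩ | ⟨h1, _⟩ <;> rw [abs_le] <;> constructor <;> linarith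

lemma abs_sum_signedTerm_reflectAtExit_le {V : ℝ} (hV0 : 0 ≤ V) (hV : ∀ i, |a i| ≤ V)
    {ω : Fin k → Fin 2} (hω : (∑ i, |a i| + V) / 2 < |∑ i, signedTerm a ω i|) :
    |∑ i, signedTerm a (reflectAtExit a ((∑ i, |a i| - V) / 2) ω) i| ≤
      (∑ i, |a i| + V) / 2 := by
  set L := (∑ i, |a i| - V) / 2 with hL
  have h := exists_exit a hV0 hω
  set τ := Nat.find h
  obtain ⟨hτk, hexit⟩ : τ < k ∧ L < |prefixSum a ω (τ + 1)| := Nat.find_spec h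
  have hbefore : |prefixSum a ω τ| ≤ L := by
    rcases Nat.eq_zero_or_pos τ with h0 | hpos
    · rw [h0, prefixSum_zero, abs_zero]
      linarith [abs_sum_signedTerm_le a ω]
    · obtain ⟨j, hj⟩ : ∃ j, τ = j + 1 := ⟨τ - 1, by omega⟩
      have := Nat.find_min h (m := j) (by omega)
      push Not at this
      rw [hj]; exact this (by omega)
  have hstep : |prefixSum a ω (τ + 1)| ≤ L + V := by
    rw [prefixSum_succ a hτk]
    linarith [abs_add_le (prefixSum a ω τ) (signedTerm a ω ⟨τ, hτk⟩),
      abs_signedTerm a ω ⟨τ, hτk⟩, hV ⟨τ, hτk⟩]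
  have htail : |∑ i, signedTerm a ω i - prefixSum a ω (τ + 1)| ≤
      2 * L + V - |prefixSum a ω (τ + 1)| := by
    have := sum_filter_add_sum_filter_not univ (fun i : Fin k => i.val < τ + 1) (fun i => |a i|)
    linarith [abs_sum_signedTerm_sub_prefixSum_le a ω (τ + 1), abs_prefixSum_le a ω (τ + 1)]
  have hflip : reflectAtExit a L ω = flipAfter τ ω := dif_pos h
  rw [hflip, sum_signedTerm_flipAfter, show (∑ i, |a i| + V) / 2 = L + V by linarith]
  exact abs_two_mul_sub_le_of_exit hexit hstep htail (by linarith)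

theorem two_pow_le_two_mul_card_abs_sum_signedTerm_le {V : ℝ} (hV0 : 0 ≤ V)
    (hV : ∀ i, |a i| ≤ V) :
    2 ^ k ≤ 2 * #{ω : Fin k → Fin 2 | |∑ i, signedTerm a ω i| ≤ (∑ i, |a i| + V) / 2} := by
  have hbad : #{ω : Fin k → Fin 2 | ¬|∑ i, signedTerm a ω i| ≤ (∑ i, |a i| + V) / 2} ≤
      #{ω : Fin k → Fin 2 | |∑ i, signedTerm a ω i| ≤ (∑ i, |a i| + V) / 2} := by
    refine card_le_card_of_injOn (reflectAtExit a ((∑ i, |a i| - V) / 2))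
      (fun ω hω => ?_) (fun ω₁ h₁ ω₂ h₂ heq => ?_)
    · simp only [coe_filter, mem_univ, true_and, Set.mem_ofPred_eq, not_le] at hω ⊢
      exact abs_sum_signedTerm_reflectAtExit_le a hV0 hV hω
    · simp only [coe_filter, mem_univ, true_and, Set.mem_ofPred_eq, not_le] at h₁ h₂
      rw [← reflectAtExit_reflectAtExit a (exists_exit a hV0 h₁),
        ← reflectAtExit_reflectAtExit a (exists_exit a hV0 h₂), heq]
  have htotal := card_filter_add_card_filter_not (s := (univ : Finset (Fin k → Fin 2)))
    fun ω => |∑ i, signedTerm a ω i| ≤ (∑ i, |a i| + V) / 2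
  simp only [card_univ, Fintype.card_fun, Fintype.card_fin] at htotal
  omega

theorem two_pow_le_two_mul_card_forall_le_sum_filter {V : ℝ} (hV0 : 0 ≤ V)
    (ha : ∀ i, 0 ≤ a i) (hV : ∀ i, a i ≤ V) :
    2 ^ k ≤ 2 * #{ω : Fin k → Fin 2 | ∀ j, (∑ i, a i - V) / 4 ≤ ∑ i with ω i = j, a i} := by
  have habs : ∀ i, |a i| = a i := fun i => abs_of_nonneg (ha i)
  refine (two_pow_le_two_mul_card_abs_sum_signedTerm_le a hV0
    fun i => (habs i).trans_le (hV i)).trans (Nat.mul_le_mul_left 2 (card_le_card fun ω hω => ?_))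
  simp only [mem_filter, mem_univ, true_and, habs, abs_le, sum_signedTerm_eq_sub] at hω ⊢
  have := sum_filter_zero_add_sum_filter_one a ω
  intro j
  fin_cases j <;> simp only [Fin.zero_eta, Fin.mk_one] <;> linarith

end Reflection
section LP

variable {n k : ℕ} {G : Fin k → Finset (Fin n)} {v : Finset (Fin n) → ℝ}
  {c : Fin k → Finset (Fin n) → ℝ} {B : ℝ}

variable (G v c B) in
def LPvalues (A : Finset (Fin n)) : Set ℝ :=
  {t : ℝ | ∃ x : Finset (Fin n) → ℝ, (∀ S, 0 ≤ x S) ∧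
    (∑ S ∈ A.powerset, (∑ i, c i (S ∩ G i)) * x S) ≤ B ∧
    (∑ S ∈ A.powerset, x S) ≤ 1 ∧
    t = ∑ S ∈ A.powerset, v S * x S}

variable (G v c B) in
lemma LPstar_eq_sSup (A : Finset (Fin n)) : LPstar G v c B A = sSup (LPvalues G v c B A) := rfl

lemma zero_mem_LPvalues (hB : 0 ≤ B) (A : Finset (Fin n)) : (0 : ℝ) ∈ LPvalues G v c B A :=
  ⟨fun _ => 0, fun _ => le_rfl, by simpa using hB, by simp, by simp⟩

lemma bddAbove_LPvalues (hvnn : ∀ S, 0 ≤ v S)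
    (hvmono : ∀ S T : Finset (Fin n), S ⊆ T → v S ≤ v T) (A : Finset (Fin n)) :
    BddAbove (LPvalues G v c B A) := by
  refine ⟨v univ, ?_⟩
  rintro t ⟨x, hx0, -, hmass, rfl⟩
  calc ∑ S ∈ A.powerset, v S * x S ≤ ∑ S ∈ A.powerset, v univ * x S :=
        sum_le_sum fun S _ => mul_le_mul_of_nonneg_right (hvmono S univ (subset_univ S)) (hx0 S)
    _ = v univ * ∑ S ∈ A.powerset, x S := (mul_sum _ _ _).symm
    _ ≤ v univ := mul_le_of_le_one_right (hvnn _) hmass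

variable (G) in
def IsUnionOfGroups (U : Finset (Fin n)) : Prop := ∀ i, G i ⊆ U ∨ Disjoint (G i) U

lemma sum_powerset_mul_sum_fiber_inter (U : Finset (Fin n)) (f x : Finset (Fin n) → ℝ) :
    ∑ T ∈ U.powerset, f T * ∑ S with S ∩ U = T, x S = ∑ S, f (S ∩ U) * x S := by
  rw [← sum_fiberwise_of_maps_to (g := fun S => S ∩ U) (t := U.powerset)
    (fun S _ => mem_powerset.2 inter_subset_right) (fun S => f (S ∩ U) * x S)]
  refine sum_congr rfl fun T _ => ?_
  rw [mul_sum]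
  exact sum_congr rfl fun S hS => by rw [(mem_filter.1 hS).2]

lemma cost_inter_le (hc0 : ∀ i, c i ∅ = 0)
    (hcnn : ∀ i (S : Finset (Fin n)), S ⊆ G i → 0 ≤ c i S)
    {U : Finset (Fin n)} (hU : IsUnionOfGroups G U) (S : Finset (Fin n)) (i : Fin k) :
    c i (S ∩ U ∩ G i) ≤ c i (S ∩ G i) := by
  rcases hU i with h | h
  · rw [inter_assoc, inter_eq_right.2 h]
  · rw [inter_assoc, inter_comm U, disjoint_iff_inter_eq_empty.1 h, inter_empty, hc0]
    exact hcnn i _ inter_subset_right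

/-- Pushing a solution forward along `S ↦ S ∩ U` keeps it feasible. -/
lemma sum_inter_mul_le_LPstar (hc0 : ∀ i, c i ∅ = 0)
    (hcnn : ∀ i (S : Finset (Fin n)), S ⊆ G i → 0 ≤ c i S)
    (hvnn : ∀ S, 0 ≤ v S) (hvmono : ∀ S T : Finset (Fin n), S ⊆ T → v S ≤ v T)
    {U : Finset (Fin n)} (hU : IsUnionOfGroups G U) {x : Finset (Fin n) → ℝ}
    (hx0 : ∀ S, 0 ≤ x S) (hcost : ∑ S, (∑ i, c i (S ∩ G i)) * x S ≤ B)
    (hmass : ∑ S, x S ≤ 1) :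
    ∑ S, v (S ∩ U) * x S ≤ LPstar G v c B U := by
  rw [LPstar_eq_sSup]
  refine le_csSup (bddAbove_LPvalues hvnn hvmono U)
    ⟨fun T => ∑ S with S ∩ U = T, x S, fun T => sum_nonneg fun S _ => hx0 S, ?_, ?_,
      (sum_powerset_mul_sum_fiber_inter U v x).symm⟩
  · rw [sum_powerset_mul_sum_fiber_inter U (fun T => ∑ i, c i (T ∩ G i)) x]
    refine (sum_le_sum fun S _ => mul_le_mul_of_nonneg_right ?_ (hx0 S)).trans hcost
    exact sum_le_sum fun i _ => cost_inter_le hc0 hcnn hU S i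
  · rwa [sum_fiberwise_of_maps_to fun S _ => mem_powerset.2 inter_subset_right]

lemma LPstar_univ_le_add (hc0 : ∀ i, c i ∅ = 0)
    (hcnn : ∀ i (S : Finset (Fin n)), S ⊆ G i → 0 ≤ c i S) (hB : 0 ≤ B)
    (hvnn : ∀ S, 0 ≤ v S) (hvmono : ∀ S T : Finset (Fin n), S ⊆ T → v S ≤ v T)
    (hxos : ∀ S : Finset (Fin n), ∃ w : Fin n → ℝ,
      (∑ e ∈ S, w e) = v S ∧ ∀ T ⊆ S, (∑ e ∈ T, w e) ≤ v T)
    {U₀ U₁ : Finset (Fin n)} (hU₀ : IsUnionOfGroups G U₀) (hU₁ : IsUnionOfGroups G U₁)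
    (hd : Disjoint U₀ U₁) (hcov : U₀ ∪ U₁ = univ) :
    LPstar G v c B univ ≤ LPstar G v c B U₀ + LPstar G v c B U₁ := by
  rw [LPstar_eq_sSup]
  refine csSup_le ⟨0, zero_mem_LPvalues hB univ⟩ ?_
  rintro t ⟨x, hx0, hcost, hmass, rfl⟩
  rw [powerset_univ] at hcost hmass ⊢
  have hsub : ∀ S, v S ≤ v (S ∩ U₀) + v (S ∩ U₁) := fun S => by
    simpa [← inter_union_distrib_left, hcov] using le_add_of_disjoint_of_xos hxos
      (hd.mono inter_subset_right inter_subset_right : Disjoint (S ∩ U₀) (S ∩ U₁))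
  calc ∑ S, v S * x S ≤ ∑ S, (v (S ∩ U₀) * x S + v (S ∩ U₁) * x S) :=
        sum_le_sum fun S _ => by nlinarith [hsub S, hx0 S]
    _ ≤ LPstar G v c B U₀ + LPstar G v c B U₁ := by
        rw [sum_add_distrib]
        exact add_le_add (sum_inter_mul_le_LPstar hc0 hcnn hvnn hvmono hU₀ hx0 hcost hmass)
          (sum_inter_mul_le_LPstar hc0 hcnn hvnn hvmono hU₁ hx0 hcost hmass)

end LP

section SideSets

variable {n k : ℕ} {G : Fin k → Finset (Fin n)}

lemma isUnionOfGroups_sideSet (hG : Pairwise (Disjoint on G)) (ω : Fin k → Fin 2)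
    (j : Fin 2) : IsUnionOfGroups G (sideSet G ω j) := fun i => by
  by_cases h : ω i = j
  · exact Or.inl (subset_biUnion_of_mem G (mem_filter.2 ⟨mem_univ _, h⟩))
  · refine Or.inr ((disjoint_biUnion_right _ _ _).2 fun i' hi' => hG fun hii' => h ?_)
    rw [hii']; exact (mem_filter.1 hi').2

lemma disjoint_sideSet_zero_one (hG : Pairwise (Disjoint on G)) (ω : Fin k → Fin 2) :
    Disjoint (sideSet G ω 0) (sideSet G ω 1) :=
  (disjoint_biUnion_left _ _ _).2 fun i hi => (disjoint_biUnion_right _ _ _).2 fun i' hi' =>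
    hG fun hii' => by simp_all

lemma sideSet_zero_union_one (hcover : univ.biUnion G = univ) (ω : Fin k → Fin 2) :
    sideSet G ω 0 ∪ sideSet G ω 1 = univ := by
  rw [sideSet, sideSet, ← union_biUnion, ← filter_or, ← hcover,
    filter_true_of_mem fun i _ => by omega]

lemma sideSet_rev (ω : Fin k → Fin 2) (j : Fin 2) :
    sideSet G (fun i => (ω i).rev) j = sideSet G ω j.rev := by
  simp only [sideSet, Fin.rev_eq_iff]

end SideSets

section Bench

variable {n k : ℕ} {G : Fin k → Finset (Fin n)} {v : Finset (Fin n) → ℝ}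
  {c : Fin k → Finset (Fin n) → ℝ} {B : ℝ}

variable (G v c B) in
def benchValues : Set ℝ :=
  {t : ℝ | ∃ (x : Finset (Fin n) → ℝ) (V : ℝ), (∀ S, 0 ≤ x S) ∧
    (∑ S : Finset (Fin n), (∑ i, c i (S ∩ G i)) * x S) ≤ B ∧
    (∑ S : Finset (Fin n), x S) ≤ 1 ∧
    (∀ i : Fin k, (∑ S : Finset (Fin n), v (S ∩ G i) * x S) ≤ V) ∧
    t = (∑ S : Finset (Fin n), v S * x S) - V}

variable (G v c B) in
lemma LPBench_eq_sSup : LPBench G v c B = sSup (benchValues G v c B) := rfl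

lemma zero_mem_benchValues (hB : 0 ≤ B) : (0 : ℝ) ∈ benchValues G v c B :=
  ⟨fun _ => 0, 0, fun _ => le_rfl, by simpa using hB, by simp, by simp, by simp⟩

lemma bddAbove_benchValues (hk : 0 < k) (hvnn : ∀ S, 0 ≤ v S)
    (hvmono : ∀ S T : Finset (Fin n), S ⊆ T → v S ≤ v T) :
    BddAbove (benchValues G v c B) := by
  obtain ⟨M, hM⟩ := bddAbove_LPvalues (G := G) (c := c) (B := B) hvnn hvmono univ
  refine ⟨M, ?_⟩
  rintro t ⟨x, V, hx0, hcost, hmass, hVi, rfl⟩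
  have hV0 : 0 ≤ V :=
    (sum_nonneg fun S _ => mul_nonneg (hvnn _) (hx0 S)).trans (hVi ⟨0, hk⟩)
  have hM' := hM ⟨x, hx0, by rwa [powerset_univ], by rwa [powerset_univ], by rw [powerset_univ]⟩
  linarith

/-- A feasible benchmark set `S` is the integral point `x = 𝟙_S`, `V = max_i v(S ∩ G i)`. -/
lemma sSup_benchmark_le_LPBench (hk : 0 < k) (hB : 0 ≤ B) (hvnn : ∀ S, 0 ≤ v S)
    (hvmono : ∀ S T : Finset (Fin n), S ⊆ T → v S ≤ v T) (hc0 : ∀ i, c i ∅ = 0) :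
    sSup {x : ℝ | ∃ S : Finset (Fin n), (∑ i, c i (S ∩ G i)) ≤ B ∧
      x = v S - sSup {y : ℝ | ∃ i : Fin k, y = v (S ∩ G i)}} ≤ LPBench G v c B := by
  refine csSup_le ⟨_, ∅, by simpa [hc0] using hB, rfl⟩ ?_
  rintro t ⟨S, hcostS, rfl⟩
  have hbdd : BddAbove {y : ℝ | ∃ i : Fin k, y = v (S ∩ G i)} :=
    (Set.finite_range fun i => v (S ∩ G i)).bddAbove.mono fun y hy => by
      obtain ⟨i, rfl⟩ := hy
      exact ⟨i, rfl⟩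
  rw [LPBench_eq_sSup]
  refine le_csSup (bddAbove_benchValues hk hvnn hvmono)
    ⟨Pi.single S 1, sSup {y : ℝ | ∃ i : Fin k, y = v (S ∩ G i)}, fun T => ?_, ?_, ?_,
      fun i => ?_, ?_⟩
  · by_cases h : T = S <;> simp [h]
  · simpa [Pi.single_apply] using hcostS
  · simp [Pi.single_apply]
  · simpa [Pi.single_apply] using le_csSup hbdd ⟨i, rfl⟩
  · simp [Pi.single_apply]

theorem two_pow_le_two_mul_card_of_mem_benchValues (hk : 0 < k)
    (hG : Pairwise (Disjoint on G)) (hcover : univ.biUnion G = univ) (hvnn : ∀ S, 0 ≤ v S)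
    (hvmono : ∀ S T : Finset (Fin n), S ⊆ T → v S ≤ v T)
    (hxos : ∀ S : Finset (Fin n), ∃ w : Fin n → ℝ,
      (∑ e ∈ S, w e) = v S ∧ ∀ T ⊆ S, (∑ e ∈ T, w e) ≤ v T)
    (hc0 : ∀ i, c i ∅ = 0) (hcnn : ∀ i (S : Finset (Fin n)), S ⊆ G i → 0 ≤ c i S)
    {t : ℝ} (ht : t ∈ benchValues G v c B) :
    2 ^ k ≤ 2 * #{ω : Fin k → Fin 2 |
      t ≤ 4 * min (LPstar G v c B (sideSet G ω 0)) (LPstar G v c B (sideSet G ω 1))} := by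
  obtain ⟨x, V, hx0, hcost, hmass, hVi, rfl⟩ := ht
  choose w hw using hxos
  -- player `i`'s share of the solution, measured by the supporting additive valuations
  set a : Fin k → ℝ := fun i => ∑ S, (∑ e ∈ S ∩ G i, w S e) * x S
  have hsum_a : ∀ s, ∑ i ∈ s, a i = ∑ S, (∑ e ∈ S ∩ s.biUnion G, w S e) * x S := fun s => by
    rw [sum_comm]
    exact sum_congr rfl fun S _ => by rw [sum_inter_biUnion hG, sum_mul]
  have ha0 : ∀ i, 0 ≤ a i := fun i => sum_nonneg fun S _ =>
    mul_nonneg (sum_nonneg_of_supporting hvmono (hw S) inter_subset_left) (hx0 S)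
  have haV : ∀ i, a i ≤ V := fun i =>
    (sum_le_sum fun S _ => mul_le_mul_of_nonneg_right ((hw S).2 _ inter_subset_left)
      (hx0 S)).trans (hVi i)
  have htotal : ∑ i, a i = ∑ S, v S * x S := by
    rw [hsum_a, hcover]
    exact sum_congr rfl fun S _ => by rw [inter_univ, (hw S).1]
  have hside : ∀ ω j, ∑ i with ω i = j, a i ≤ LPstar G v c B (sideSet G ω j) := fun ω j => by
    rw [hsum_a]
    refine le_trans (sum_le_sum fun S _ => mul_le_mul_of_nonneg_right
      ((hw S).2 _ inter_subset_left) (hx0 S)) ?_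
    exact sum_inter_mul_le_LPstar hc0 hcnn hvnn hvmono (isUnionOfGroups_sideSet hG ω j) hx0
      hcost hmass
  have hV0 : 0 ≤ V := (ha0 ⟨0, hk⟩).trans (haV _)
  refine (two_pow_le_two_mul_card_forall_le_sum_filter a hV0 ha0 haV).trans
    (Nat.mul_le_mul_left 2 (card_le_card fun ω hω => ?_))
  simp only [mem_filter, mem_univ, true_and, htotal] at hω ⊢
  linarith [le_min ((hω 0).trans (hside ω 0)) ((hω 1).trans (hside ω 1))]

end Bench

lemma one_div_four_le_prOmega {k : ℕ} {P : (Fin k → Fin 2) → Prop}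
    (h : 2 ^ k ≤ 4 * #{ω | P ω}) : 1 / 4 ≤ prOmega k P := by
  rw [prOmega, le_div_iff₀ (by positivity)]
  have : (2 : ℝ) ^ k ≤ 4 * #{ω | P ω} := by exact_mod_cast h
  linarith

theorem stmt8_general {n k : ℕ} (hk : 0 < k) (G : Fin k → Finset (Fin n))
    (hdisj : ∀ i j : Fin k, i ≠ j → Disjoint (G i) (G j))
    (hcover : Finset.univ.biUnion G = (Finset.univ : Finset (Fin n)))
    (v : Finset (Fin n) → ℝ) (hvnn : ∀ S, 0 ≤ v S)
    (hvmono : ∀ S T : Finset (Fin n), S ⊆ T → v S ≤ v T)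
    -- XOS: every `S` has a supporting additive valuation
    (hxos : ∀ S : Finset (Fin n), ∃ w : Fin n → ℝ,
      (∑ e ∈ S, w e) = v S ∧ ∀ T ⊆ S, (∑ e ∈ T, w e) ≤ v T)
    (c : Fin k → Finset (Fin n) → ℝ)
    (hc0 : ∀ i, c i ∅ = 0)
    (hcnn : ∀ i (S : Finset (Fin n)), S ⊆ G i → 0 ≤ c i S)
    (B : ℝ) (hB : 0 ≤ B)
    (OPTBench : ℝ)
    (hOPTB : OPTBench = sSup {x : ℝ | ∃ S : Finset (Fin n),
        (∑ i, c i (S ∩ G i)) ≤ B ∧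
        x = v S - sSup {y : ℝ | ∃ i : Fin k, y = v (S ∩ G i)}}) :
    1 / 4 ≤ prOmega k (fun ω =>
        LPstar G v c B (sideSet G ω 0) ≤ LPstar G v c B (sideSet G ω 1) ∧
        LPBench G v c B / 4 ≤ LPstar G v c B (sideSet G ω 0) ∧
        OPTBench / 4 ≤ LPBench G v c B / 4 ∧
        LPstar G v c B Finset.univ / 2 ≤ LPstar G v c B (sideSet G ω 1)) := by
  set LP : (Fin k → Fin 2) → Fin 2 → ℝ := fun ω j => LPstar G v c B (sideSet G ω j)
  have hhalf : 2 ^ k ≤ 2 * #{ω | LPBench G v c B ≤ 4 * min (LP ω 0) (LP ω 1)} := by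
    obtain ⟨t, ht, hsub⟩ := exists_filter_le_subset_filter_sSup_le
      (fun ω => 4 * min (LP ω 0) (LP ω 1)) ⟨0, zero_mem_benchValues (G := G) (v := v) (c := c) hB⟩
    exact (two_pow_le_two_mul_card_of_mem_benchValues hk hdisj hcover hvnn hvmono hxos hc0 hcnn
      ht).trans (Nat.mul_le_mul_left 2 (card_le_card hsub))
  have hswap : ∀ ω : Fin k → Fin 2, LP (fun i => (ω i).rev) 0 = LP ω 1 ∧
      LP (fun i => (ω i).rev) 1 = LP ω 0 :=
    fun ω => by simp only [LP, sideSet_rev]; exact ⟨rfl, rfl⟩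
  have hsorted : #{ω | LPBench G v c B ≤ 4 * min (LP ω 0) (LP ω 1)} ≤
      2 * #{ω | LPBench G v c B ≤ 4 * min (LP ω 0) (LP ω 1) ∧ LP ω 0 ≤ LP ω 1} := by
    rw [← filter_filter]
    refine card_le_two_mul_card_filter (σ := fun ω i => (ω i).rev)
      (fun ω => funext fun i => Fin.rev_rev _) (fun ω hω => ?_) fun ω _ => ?_
    · simpa [hswap, min_comm] using hω
    · simpa [hswap] using le_total _ _
  have hopt : OPTBench ≤ LPBench G v c B :=
    hOPTB ▸ sSup_benchmark_le_LPBench hk hB hvnn hvmono hc0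
  refine one_div_four_le_prOmega ((show 2 ^ k ≤ 4 * #{ω | LPBench G v c B ≤
    4 * min (LP ω 0) (LP ω 1) ∧ LP ω 0 ≤ LP ω 1} by omega).trans
      (Nat.mul_le_mul_left 4 (card_le_card fun ω hω => ?_)))
  simp only [mem_filter, mem_univ, true_and] at hω ⊢
  have hsplit := LPstar_univ_le_add hc0 hcnn hB hvnn hvmono hxos
    (isUnionOfGroups_sideSet hdisj ω 0) (isUnionOfGroups_sideSet hdisj ω 1)
    (disjoint_sideSet_zero_one hdisj ω) (sideSet_zero_union_one hcover ω)
  exact ⟨hω.2, by linarith [min_le_left (LP ω 0) (LP ω 1)], by linarith, by linarith⟩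

/-- For a monotone normalized XOS valuation `v` and monotone normalized
player costs, with probability at least `1/4` over the random partition `U_1, U_2`,
`LP*(U_2) ≥ LP*(U_1) ≥ LP*_Bench / 4 ≥ OPT_Bench / 4` and `LP*(U_2) ≥ LP*(U) / 2`. -/
theorem stmt8 {n k : ℕ} (hk : 0 < k) (G : Fin k → Finset (Fin n))
    (hdisj : ∀ i j : Fin k, i ≠ j → Disjoint (G i) (G j))
    (hcover : Finset.univ.biUnion G = (Finset.univ : Finset (Fin n)))
    (v : Finset (Fin n) → ℝ) (hv0 : v ∅ = 0) (hvnn : ∀ S, 0 ≤ v S)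
    (hvmono : ∀ S T : Finset (Fin n), S ⊆ T → v S ≤ v T)
    -- XOS: every `S` has a supporting additive valuation
    (hxos : ∀ S : Finset (Fin n), ∃ w : Fin n → ℝ,
      (∑ e ∈ S, w e) = v S ∧ ∀ T ⊆ S, (∑ e ∈ T, w e) ≤ v T)
    (c : Fin k → Finset (Fin n) → ℝ)
    (hc0 : ∀ i, c i ∅ = 0)
    (hcnn : ∀ i (S : Finset (Fin n)), S ⊆ G i → 0 ≤ c i S)
    (hcmono : ∀ i (S T : Finset (Fin n)), S ⊆ T → T ⊆ G i → c i S ≤ c i T)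
    (B : ℝ) (hB : 0 ≤ B)
    (OPTBench : ℝ)
    (hOPTB : OPTBench = sSup {x : ℝ | ∃ S : Finset (Fin n),
        (∑ i, c i (S ∩ G i)) ≤ B ∧
        x = v S - sSup {y : ℝ | ∃ i : Fin k, y = v (S ∩ G i)}}) :
    1 / 4 ≤ prOmega k (fun ω =>
        LPstar G v c B (sideSet G ω 0) ≤ LPstar G v c B (sideSet G ω 1) ∧
        LPBench G v c B / 4 ≤ LPstar G v c B (sideSet G ω 0) ∧
        OPTBench / 4 ≤ LPBench G v c B / 4 ∧
        LPstar G v c B Finset.univ / 2 ≤ LPstar G v c B (sideSet G ω 1)) :=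
  stmt8_general hk G hdisj hcover v hvnn hvmono hxos c hc0 hcnn B hB OPTBench hOPTB
end

section
/- Let U be a finite set partitioned into G_1, …, G_k, let g : 2^U → ℝ≥0 be subadditive with g(∅) = 0, let each player i have a monotone normalized cost function c_i : 2^{G_i} → ℝ≥0 with c(S) := Σ_i c_i(S ∩ G_i), let B ≥ 0 and Val > 0, and let S ⊆ U satisfy c(S) ≤ B. Then there exists T ⊆ S with c(T) ≤ B/2 and min{ vbench_g(S) − Val, Val − max_{e∈S} g({e}) } < g(T) ≤ Val, where vbench_g(S) := g(S) − max_{i∈[k]} g(S ∩ G_i) and the maximum over an empty set is taken to be 0. -/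
/-!
Split the players into groups `I`, `J` and one leftover player `m` so that the parts `S_I`, `S_J`
of `S` they own both cost at most `B/2` (take `I` maximal with cost `≤ B/2`). Subadditivity gives
`g S ≤ g S_I + g (S ∩ G_m) + g S_J`, so the more valuable part `W` has `2 g W ≥ vbench_g(S)`.
With `M = max_{e ∈ S} g {e}` and `L` the lower bound of the window, `2 L ≤ vbench_g(S) − M`, so
`g W > L` as soon as `M > 0`, which holds unless `L < 0` (and then `T = ∅` works). Removing an
element lowers `g` by at most `M ≤ Val − L`, so pruning `W` one element at a time while its value
exceeds `Val` lands in the window `(L, Val]`.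
-/

open Finset

section Subadditive

variable {α : Type*} [DecidableEq α] {g : Finset α → ℝ}

theorem le_sum_singleton_of_subadditive (hg0 : g ∅ = 0)
    (hgsub : ∀ S T, g (S ∪ T) ≤ g S + g T) (T : Finset α) :
    g T ≤ ∑ e ∈ T, g {e} := by
  induction T using Finset.induction with
  | empty => simp [hg0]
  | insert a s ha ih =>
    rw [sum_insert ha, insert_eq]
    linarith [hgsub {a} s]

theorem exists_singleton_pos_of_subadditive (hg0 : g ∅ = 0)
    (hgsub : ∀ S T, g (S ∪ T) ≤ g S + g T) {T : Finset α} (hT : 0 < g T) :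
    ∃ e ∈ T, 0 < g {e} := by
  have h := hT.trans_le (le_sum_singleton_of_subadditive hg0 hgsub T)
  rw [← sum_const_zero (s := T)] at h
  exact exists_lt_of_sum_lt h

theorem exists_subset_lt_le_of_subadditive (hg0 : g ∅ = 0)
    (hgsub : ∀ S T, g (S ∪ T) ≤ g S + g T) {L M Val : ℝ} (hVal : 0 ≤ Val)
    (hLMV : L + M ≤ Val) {W : Finset α} (hW : ∀ e ∈ W, g {e} ≤ M) (hLW : L < g W) :
    ∃ T ⊆ W, L < g T ∧ g T ≤ Val := by
  induction W using Finset.strongInduction with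
  | H W ih =>
    by_cases hWV : g W ≤ Val
    · exact ⟨W, Subset.rfl, hLW, hWV⟩
    obtain ⟨e, he⟩ : W.Nonempty := by
      rw [nonempty_iff_ne_empty]
      rintro rfl
      exact hWV (hg0 ▸ hVal)
    have hsplit : g W ≤ g {e} + g (W.erase e) := by
      simpa only [← insert_eq, insert_erase he] using hgsub {e} (W.erase e)
    obtain ⟨T, hTW, hT⟩ := ih (W.erase e) (erase_ssubset he)
      (fun x hx => hW x (mem_of_mem_erase hx)) (by linarith [hW e he])
    exact ⟨T, hTW.trans (erase_subset e W), hT⟩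

end Subadditive

theorem exists_union_insert_eq_univ_sum_le_half {ι : Type*} [Fintype ι] [DecidableEq ι]
    [Nonempty ι] (w : ι → ℝ) {B : ℝ} (hB : 0 ≤ B) (hw : ∑ i, w i ≤ B) :
    ∃ I J : Finset ι, ∃ m, I ∪ insert m J = univ ∧
      ∑ i ∈ I, w i ≤ B / 2 ∧ ∑ i ∈ J, w i ≤ B / 2 := by
  obtain ⟨I, hI, hImax⟩ := exists_max_image ((univ : Finset (Finset ι)).filter
    fun I => ∑ i ∈ I, w i ≤ B / 2) card ⟨∅, by simp; positivity⟩
  rw [mem_filter] at hI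
  by_cases hIuniv : I = univ
  · exact ⟨I, ∅, Classical.arbitrary ι, by simp [hIuniv], hI.2, by simp; positivity⟩
  obtain ⟨m, hm⟩ : ∃ m, m ∉ I := by simpa [eq_univ_iff_forall] using hIuniv
  have hmI : B / 2 < ∑ i ∈ insert m I, w i := by
    by_contra! h
    have := hImax (insert m I) (mem_filter.2 ⟨mem_univ _, h⟩)
    rw [card_insert_of_notMem hm] at this
    omega
  refine ⟨I, univ \ insert m I, m, ?_, hI.2, ?_⟩
  · ext i
    simp only [mem_union, mem_insert, mem_sdiff, mem_univ, true_and, iff_true]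
    tauto
  · linarith [sum_sdiff (subset_univ (insert m I)) (f := w)]

section Cost

variable {α ι : Type*} [Fintype ι] (G : ι → Finset α) (c : ι → Finset α → ℝ)

theorem sum_inter_mono [DecidableEq α]
    (hcmono : ∀ i (S T : Finset α), S ⊆ T → T ⊆ G i → c i S ≤ c i T) {T T' : Finset α}
    (h : T ⊆ T') : ∑ i, c i (T ∩ G i) ≤ ∑ i, c i (T' ∩ G i) :=
  sum_le_sum fun i _ => hcmono i _ _ (inter_subset_inter_right h) inter_subset_right

theorem sum_inter_inter_biUnion [DecidableEq α] [DecidableEq ι]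
    (hdisj : ∀ i j, i ≠ j → Disjoint (G i) (G j)) (hc0 : ∀ i, c i ∅ = 0)
    (S : Finset α) (I : Finset ι) :
    ∑ i, c i (S ∩ I.biUnion G ∩ G i) = ∑ i ∈ I, c i (S ∩ G i) := by
  refine (sum_subset_zero_on_sdiff (subset_univ I) (fun i hi => ?_) fun i hi => ?_).symm
  · have hi : i ∉ I := (mem_sdiff.1 hi).2
    have : Disjoint (I.biUnion G) (G i) :=
      (disjoint_biUnion_left _ _ _).2 fun j hj => hdisj j i (ne_of_mem_of_not_mem hj hi)
    rw [inter_assoc, disjoint_iff_inter_eq_empty.1 this, inter_empty, hc0]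
  · rw [inter_assoc, inter_eq_right.2 (subset_biUnion_of_mem G hi)]

theorem exists_subset_sum_le_half_and_le_two_mul_add [DecidableEq α] [DecidableEq ι] [Nonempty ι]
    {g : Finset α → ℝ} (hgsub : ∀ S T, g (S ∪ T) ≤ g S + g T)
    (hdisj : ∀ i j, i ≠ j → Disjoint (G i) (G j)) (hc0 : ∀ i, c i ∅ = 0) {B : ℝ} (hB : 0 ≤ B)
    {S : Finset α} (hSG : S ⊆ univ.biUnion G) (hS : ∑ i, c i (S ∩ G i) ≤ B) :
    ∃ W ⊆ S, ∑ i, c i (W ∩ G i) ≤ B / 2 ∧ ∃ m, g S ≤ 2 * g W + g (S ∩ G m) := by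
  obtain ⟨I, J, m, hcov, hI, hJ⟩ :=
    exists_union_insert_eq_univ_sum_le_half (fun i => c i (S ∩ G i)) hB hS
  have hSeq : S = S ∩ I.biUnion G ∪ (S ∩ G m ∪ S ∩ J.biUnion G) := by
    rw [← inter_union_distrib_left, ← inter_union_distrib_left, ← biUnion_insert,
      ← union_biUnion, hcov, inter_eq_left.2 hSG]
  have hgS : g S ≤ g (S ∩ I.biUnion G) + g (S ∩ G m) + g (S ∩ J.biUnion G) := by
    conv_lhs => rw [hSeq]
    linarith [hgsub (S ∩ I.biUnion G) (S ∩ G m ∪ S ∩ J.biUnion G),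
      hgsub (S ∩ G m) (S ∩ J.biUnion G)]
  rw [← sum_inter_inter_biUnion G c hdisj hc0] at hI hJ
  rcases le_total (g (S ∩ I.biUnion G)) (g (S ∩ J.biUnion G)) with hIJ | hIJ
  · exact ⟨_, inter_subset_left, hJ, m, by linarith⟩
  · exact ⟨_, inter_subset_left, hI, m, by linarith⟩

end Cost

theorem stmt9_general {n k : ℕ} (hk : 0 < k) (G : Fin k → Finset (Fin n))
    (hdisj : ∀ i j : Fin k, i ≠ j → Disjoint (G i) (G j))
    (hcover : Finset.univ.biUnion G = (Finset.univ : Finset (Fin n)))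
    (g : Finset (Fin n) → ℝ) (hg0 : g ∅ = 0) (hgnn : ∀ S, 0 ≤ g S)
    (hgsub : ∀ S T : Finset (Fin n), g (S ∪ T) ≤ g S + g T)
    (c : Fin k → Finset (Fin n) → ℝ)
    (hc0 : ∀ i, c i ∅ = 0)
    (hcmono : ∀ i (S T : Finset (Fin n)), S ⊆ T → T ⊆ G i → c i S ≤ c i T)
    (B Val : ℝ) (hB : 0 ≤ B) (hVal : 0 < Val)
    (S : Finset (Fin n)) (hS : (∑ i, c i (S ∩ G i)) ≤ B) :
    ∃ T ⊆ S, (∑ i, c i (T ∩ G i)) ≤ B / 2 ∧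
      min ((g S - sSup {x : ℝ | ∃ i : Fin k, x = g (S ∩ G i)}) - Val)
          (Val - sSup {x : ℝ | ∃ e ∈ S, x = g {e}}) < g T ∧
      g T ≤ Val := by
  classical
  have : Nonempty (Fin k) := ⟨⟨0, hk⟩⟩
  set MX := sSup {x : ℝ | ∃ i : Fin k, x = g (S ∩ G i)}
  set M := sSup {x : ℝ | ∃ e ∈ S, x = g {e}}
  set L := min (g S - MX - Val) (Val - M)
  have hMX (i : Fin k) : g (S ∩ G i) ≤ MX :=
    le_csSup ((Set.finite_range fun i => g (S ∩ G i)).subset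
      (by rintro _ ⟨i, rfl⟩; exact ⟨i, rfl⟩)).bddAbove ⟨i, rfl⟩
  have hM (e) (he : e ∈ S) : g {e} ≤ M :=
    le_csSup ((S.finite_toSet.image fun e => g {e}).subset
      (by rintro _ ⟨e, he, rfl⟩; exact ⟨e, he, rfl⟩)).bddAbove ⟨e, he, rfl⟩
  have hL_le : L ≤ g S - MX - Val ∧ L ≤ Val - M := ⟨min_le_left _ _, min_le_right _ _⟩
  suffices ∃ W ⊆ S, ∑ i, c i (W ∩ G i) ≤ B / 2 ∧ L < g W by
    obtain ⟨W, hWS, hWc, hLW⟩ := this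
    obtain ⟨T, hTW, hT⟩ := exists_subset_lt_le_of_subadditive hg0 hgsub hVal.le
      (by linarith [hL_le.2]) (fun e he => hM e (hWS he)) hLW
    exact ⟨T, hTW.trans hWS, (sum_inter_mono G c hcmono hTW).trans hWc, hT⟩
  by_cases hL : L < 0
  · exact ⟨∅, empty_subset S, by simp [hc0]; positivity, hg0 ▸ hL⟩
  obtain ⟨W, hWS, hWc, m, hgW⟩ := exists_subset_sum_le_half_and_le_two_mul_add G c hgsub hdisj
    hc0 hB (hcover ▸ subset_univ S) hS
  refine ⟨W, hWS, hWc, ?_⟩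
  -- `0 ≤ L` forces `0 < g S`, hence `0 < M`.
  obtain ⟨e, he, hpos⟩ := exists_singleton_pos_of_subadditive hg0 hgsub
    (T := S) (by linarith [hgnn (S ∩ G m), hMX m])
  linarith [hpos.trans_le (hM e he), hMX m]

/-- pruning lemma, general costs. Let `g` be subadditive and
normalized, let each player `i` have a monotone normalized cost function on `G_i`, let
`c(S) = ∑_i c_i (S ∩ G_i)`, `B ≥ 0`, `Val > 0`, and let `S` satisfy `c S ≤ B`. Then
there is `T ⊆ S` with `c T ≤ B/2` and
`min (vbench_g S − Val) (Val − max_{e∈S} g {e}) < g T ≤ Val`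
(the maximum over an empty set being `0`, as is `sSup ∅` in `ℝ`). -/
theorem stmt9 {n k : ℕ} (hk : 0 < k) (G : Fin k → Finset (Fin n))
    (hdisj : ∀ i j : Fin k, i ≠ j → Disjoint (G i) (G j))
    (hcover : Finset.univ.biUnion G = (Finset.univ : Finset (Fin n)))
    (g : Finset (Fin n) → ℝ) (hg0 : g ∅ = 0) (hgnn : ∀ S, 0 ≤ g S)
    (hgsub : ∀ S T : Finset (Fin n), g (S ∪ T) ≤ g S + g T)
    (c : Fin k → Finset (Fin n) → ℝ)
    (hc0 : ∀ i, c i ∅ = 0)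
    (hcnn : ∀ i (S : Finset (Fin n)), S ⊆ G i → 0 ≤ c i S)
    (hcmono : ∀ i (S T : Finset (Fin n)), S ⊆ T → T ⊆ G i → c i S ≤ c i T)
    (B Val : ℝ) (hB : 0 ≤ B) (hVal : 0 < Val)
    (S : Finset (Fin n)) (hS : (∑ i, c i (S ∩ G i)) ≤ B) :
    ∃ T ⊆ S, (∑ i, c i (T ∩ G i)) ≤ B / 2 ∧
      min ((g S - sSup {x : ℝ | ∃ i : Fin k, x = g (S ∩ G i)}) - Val)
          (Val - sSup {x : ℝ | ∃ e ∈ S, x = g {e}}) < g T ∧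
      g T ≤ Val :=
  stmt9_general hk G hdisj hcover g hg0 hgnn hgsub c hc0 hcmono B Val hB hVal S hS
end

section
/- Let A be a finite set, v, c : 2^A → ℝ≥0, B > 0, V > 0, and λ ∈ (0,1]. Let L be the maximum, over weight functions x : 2^A → ℝ≥0 with Σ_S c(S)x_S ≤ B and Σ_S x_S ≤ 1, of Σ_S v(S)x_S; and let Q be the maximum, over weight functions x : 2^A → ℝ≥0 with Σ_S v(S)x_S ≤ λV and Σ_S x_S ≤ 1, of Σ_S (v(S) − (λV/B)·c(S))·x_S. If L ≥ λV, then Q ≥ λV·(1 − λV/L); in particular, if L ≥ V then Q ≥ λ(1−λ)V. -/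
open Finset

/-- Let `L` be the optimal value of the LP-relaxation BFLP (budget
`B`), and `Q` the optimal value of the LP-relaxation of the constrained demand query
with value cap `λV` and price multiplier `λV/B`. If `L ≥ λV` then
`Q ≥ λV (1 − λV/L)`; in particular if `L ≥ V` then `Q ≥ λ(1−λ)V`. -/
theorem stmt11 {n : ℕ} (v c : Finset (Fin n) → ℝ)
    (hvnn : ∀ S, 0 ≤ v S) (hcnn : ∀ S, 0 ≤ c S)
    (B V lam L Q : ℝ) (hB : 0 < B) (hV : 0 < V) (hlam0 : 0 < lam) (hlam1 : lam ≤ 1)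
    -- `L` is the maximum of BFLP
    (hL : IsGreatest {t : ℝ | ∃ x : Finset (Fin n) → ℝ, (∀ S, 0 ≤ x S) ∧
        (∑ S : Finset (Fin n), c S * x S) ≤ B ∧
        (∑ S : Finset (Fin n), x S) ≤ 1 ∧
        t = ∑ S : Finset (Fin n), v S * x S} L)
    -- `Q` is the maximum of the constrained-demand LP
    (hQ : IsGreatest {t : ℝ | ∃ x : Finset (Fin n) → ℝ, (∀ S, 0 ≤ x S) ∧
        (∑ S : Finset (Fin n), v S * x S) ≤ lam * V ∧
        (∑ S : Finset (Fin n), x S) ≤ 1 ∧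
        t = ∑ S : Finset (Fin n), (v S - lam * V / B * c S) * x S} Q) :
    (lam * V ≤ L → lam * V * (1 - lam * V / L) ≤ Q) ∧
    (V ≤ L → lam * (1 - lam) * V ≤ Q) := by
  obtain ⟨⟨x, hx0, hxc, hx1, hxL⟩, hLub⟩ := hL
  obtain ⟨hQmem, hQub⟩ := hQ
  have key : lam * V ≤ L → lam * V * (1 - lam * V / L) ≤ Q := by
    intro h
    have hlV : 0 < lam * V := mul_pos hlam0 hV
    have hL0 : 0 < L := lt_of_lt_of_le hlV h
    set α := lam * V / L with hαdef
    have hα0 : 0 ≤ α := by positivity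
    have hα1 : α ≤ 1 := (div_le_one hL0).2 h
    have hαL : α * L = lam * V := div_mul_cancel₀ _ hL0.ne'
    have hsumv : (∑ S : Finset (Fin n), v S * (α * x S)) = lam * V := by
      have : (∑ S : Finset (Fin n), v S * (α * x S))
          = α * ∑ S : Finset (Fin n), v S * x S := by
        rw [Finset.mul_sum]; congr 1; ext S; ring
      rw [this, ← hxL, hαL]
    have hobj : (∑ S : Finset (Fin n), (v S - lam * V / B * c S) * (α * x S)) ∈
        {t : ℝ | ∃ y : Finset (Fin n) → ℝ, (∀ S, 0 ≤ y S) ∧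
          (∑ S : Finset (Fin n), v S * y S) ≤ lam * V ∧
          (∑ S : Finset (Fin n), y S) ≤ 1 ∧
          t = ∑ S : Finset (Fin n), (v S - lam * V / B * c S) * y S} := by
      refine ⟨fun S => α * x S, fun S => mul_nonneg hα0 (hx0 S), hsumv.le, ?_, rfl⟩
      calc (∑ S : Finset (Fin n), α * x S) = α * ∑ S : Finset (Fin n), x S := by
            rw [Finset.mul_sum]
        _ ≤ α * 1 := by
            exact mul_le_mul_of_nonneg_left hx1 hα0
        _ ≤ 1 := by linarith
    have hQge := hQub hobj
    have hsplit : (∑ S : Finset (Fin n), (v S - lam * V / B * c S) * (α * x S))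
        = (∑ S : Finset (Fin n), v S * (α * x S))
          - lam * V / B * α * (∑ S : Finset (Fin n), c S * x S) := by
      rw [Finset.mul_sum, ← Finset.sum_sub_distrib]
      congr 1; ext S; ring
    have hcb : lam * V / B * α * (∑ S : Finset (Fin n), c S * x S)
        ≤ lam * V / B * α * B := by
      apply mul_le_mul_of_nonneg_left hxc
      positivity
    have hkb : lam * V / B * α * B = lam * V * α := by
      field_simp
    have : lam * V * (1 - α) ≤
        ∑ S : Finset (Fin n), (v S - lam * V / B * c S) * (α * x S) := by
      rw [hsplit, hsumv]
      nlinarith [hcb, hkb]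
    linarith
  refine ⟨key, fun h => ?_⟩
  have hlV : lam * V ≤ L := le_trans (by nlinarith) h
  have hL0 : 0 < L := lt_of_lt_of_le (mul_pos hlam0 hV) hlV
  have h1 := key hlV
  have hα : lam * V / L ≤ lam := by
    rw [div_le_iff₀ hL0]
    nlinarith
  nlinarith [mul_pos hlam0 hV]
end

section
/- Let U be a finite set partitioned into G_1, …, G_k, let v : 2^U → ℝ≥0 be any valuation, let B ≥ 0, let each player i have a normalized cost function c_i : 2^{G_i} → ℝ≥0, and define opt_i and 𝒮_i as for Mechanism 2ndOpt. Suppose î ∈ [k] and Ŝ ∈ 𝒮_î satisfy c_î(Ŝ) ≤ B. Then: (i) v(Ŝ) ≥ opt_i for every player i ≠ î; and (ii) for every player i ≠ î and every S ∈ 𝒮_i, one has c_i(S) > B. (Consequently Mechanism 2ndOpt, which returns a minimum-cost set Ŝ from ⋃_i 𝒮_i and pays B to its owner, is truthful, individually rational, budget-feasible, and its output value is at least the second-largest opt_i value.) -/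
open Finset

/-- `opt_i = max{v S : S ⊆ G_i, c_i S ≤ B}`. -/
noncomputable def optPl {n k : ℕ} (G : Fin k → Finset (Fin n))
    (v : Finset (Fin n) → ℝ) (c : Fin k → Finset (Fin n) → ℝ) (B : ℝ)
    (i : Fin k) : ℝ :=
  sSup {x : ℝ | ∃ S : Finset (Fin n), S ⊆ G i ∧ c i S ≤ B ∧ x = v S}

/-- The feasible-set collection `𝒮_i` of Mechanism 2ndOpt:
`{S ⊆ G_i : v S ≥ opt_j for all j < i, and v S > opt_j for all j > i}`. -/
def Scal {n k : ℕ} (G : Fin k → Finset (Fin n))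
    (v : Finset (Fin n) → ℝ) (c : Fin k → Finset (Fin n) → ℝ) (B : ℝ)
    (i : Fin k) : Set (Finset (Fin n)) :=
  {S | S ⊆ G i ∧ (∀ j : Fin k, j < i → optPl G v c B j ≤ v S) ∧
       (∀ j : Fin k, i < j → optPl G v c B j < v S)}


lemma le_optPl {n k : ℕ} (G : Fin k → Finset (Fin n))
    (v : Finset (Fin n) → ℝ) (c : Fin k → Finset (Fin n) → ℝ) (B : ℝ)
    (i : Fin k) (S : Finset (Fin n)) (hS : S ⊆ G i) (hc : c i S ≤ B) :
    v S ≤ optPl G v c B i := by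
  apply le_csSup
  · apply Set.Finite.bddAbove
    apply Set.Finite.subset (Set.finite_range v)
    rintro x ⟨T, -, -, rfl⟩
    exact ⟨T, rfl⟩
  · exact ⟨S, hS, hc, rfl⟩

/-- If `î ∈ [k]` and `Ŝ ∈ 𝒮_î` satisfy `c_î Ŝ ≤ B`, then
(i) `v Ŝ ≥ opt_i` for every player `i ≠ î`, and
(ii) for every player `i ≠ î` and every `S ∈ 𝒮_i`, `c_i S > B`. -/
theorem stmt14 {n k : ℕ} (hk : 0 < k) (G : Fin k → Finset (Fin n))
    (hdisj : ∀ i j : Fin k, i ≠ j → Disjoint (G i) (G j))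
    (hcover : Finset.univ.biUnion G = (Finset.univ : Finset (Fin n)))
    (v : Finset (Fin n) → ℝ) (hvnn : ∀ S, 0 ≤ v S)
    (c : Fin k → Finset (Fin n) → ℝ)
    (hc0 : ∀ i, c i ∅ = 0)
    (hcnn : ∀ i (S : Finset (Fin n)), S ⊆ G i → 0 ≤ c i S)
    (B : ℝ) (hB : 0 ≤ B)
    (ihat : Fin k) (Shat : Finset (Fin n))
    (hShat : Shat ∈ Scal G v c B ihat) (hcost : c ihat Shat ≤ B) :
    (∀ i : Fin k, i ≠ ihat → optPl G v c B i ≤ v Shat) ∧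
    (∀ i : Fin k, i ≠ ihat → ∀ S ∈ Scal G v c B i, B < c i S) := by
  obtain ⟨hsub, hlt, hgt⟩ := hShat
  have part1 : ∀ i : Fin k, i ≠ ihat → optPl G v c B i ≤ v Shat := by
    intro i hi
    rcases lt_or_gt_of_ne hi with h | h
    · exact hlt i h
    · exact (hgt i h).le
  refine ⟨part1, ?_⟩
  intro i hi S hS
  by_contra hle
  push_neg at hle
  obtain ⟨hsub', hlt', hgt'⟩ := hS
  have hvS : v S ≤ optPl G v c B i := le_optPl G v c B i S hsub' hle
  have hvhat : v Shat ≤ optPl G v c B ihat := le_optPl G v c B ihat Shat hsub hcost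
  rcases lt_or_gt_of_ne hi with h | h
  · -- i < ihat
    have h1 : optPl G v c B ihat < v S := hgt' ihat h
    have h2 : optPl G v c B i ≤ v Shat := hlt i h
    linarith
  · -- ihat < i
    have h1 : optPl G v c B ihat ≤ v S := hlt' ihat h
    have h2 : optPl G v c B i < v Shat := hgt i h
    linarith
end

section
/- Let G be a finite set, let v : 2^G → ℝ≥0 be subadditive with v(∅) = 0, let c : 2^G → ℝ≥0 be monotone and superadditive with c(∅) = 0, let B > 0 and Val > 0, and suppose opt := max{v(S) : S ⊆ G, c(S) ≤ B} ≥ Val. Let T* be any maximizer of v(S) − (Val/(2B))·c(S) over {S ⊆ G : v(S) ≤ Val/2}. Then at least one of the following holds: (i) v(T*) − (Val/(2B))·c(T*) ≥ Val/8; or (ii) there exists e ∈ G with c({e}) ≤ B and v({e}) ≥ Val/8. -/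
open Finset

lemma peel_aux {m : ℕ} (v : Finset (Fin m) → ℝ) (hv0 : v ∅ = 0)
    (hvsub : ∀ S T : Finset (Fin m), v (S ∪ T) ≤ v S + v T)
    (Val : ℝ) (hVal : 0 < Val)
    (W : Finset (Fin m)) (hsing : ∀ e ∈ W, v {e} < Val / 8)
    (hW : 3 * Val / 8 < v W) :
    ∃ T, T ⊆ W ∧ 3 * Val / 8 < v T ∧ v T ≤ Val / 2 := by
  induction W using Finset.strongInduction with
  | _ W ih =>
    by_cases h : v W ≤ Val / 2
    · exact ⟨W, Finset.Subset.refl W, hW, h⟩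
    · push_neg at h
      have hne : W.Nonempty := by
        rcases W.eq_empty_or_nonempty with rfl | h'
        · rw [hv0] at hW; linarith
        · exact h'
      obtain ⟨e, he⟩ := hne
      have hWe : W = (W.erase e) ∪ {e} := by
        rw [Finset.union_comm, ← Finset.insert_eq, Finset.insert_erase he]
      have h1 : v W ≤ v (W.erase e) + v {e} := by
        calc v W = v ((W.erase e) ∪ {e}) := by rw [← hWe]
        _ ≤ v (W.erase e) + v {e} := hvsub _ _
      have h2 : 3 * Val / 8 < v (W.erase e) := by
        have := hsing e he; linarith
      obtain ⟨T, hT, hv1, hv2⟩ := ih (W.erase e) (Finset.erase_ssubset he)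
        (fun x hx => hsing x (Finset.mem_of_mem_erase hx)) h2
      exact ⟨T, hT.trans (Finset.erase_subset _ _), hv1, hv2⟩

/-- guarantee underlying the single-player mechanisms `M⁽¹⁾, M⁽²⁾`.
Let `v` be subadditive and normalized, `c` monotone superadditive and normalized,
`B > 0`, `Val > 0`, and suppose `opt := max{v S : c S ≤ B} ≥ Val`. If `T*` maximizes
`v S − (Val/(2B))·c S` over `{S : v S ≤ Val/2}`, then either
`v T* − (Val/(2B))·c T* ≥ Val/8`, or some single item `e` has `c {e} ≤ B` and
`v {e} ≥ Val/8`. -/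
theorem stmt15 {m : ℕ} (v c : Finset (Fin m) → ℝ)
    (hv0 : v ∅ = 0) (hvnn : ∀ S, 0 ≤ v S)
    (hvsub : ∀ S T : Finset (Fin m), v (S ∪ T) ≤ v S + v T)
    (hc0 : c ∅ = 0) (hcnn : ∀ S, 0 ≤ c S)
    (hcmono : ∀ S T : Finset (Fin m), S ⊆ T → c S ≤ c T)
    (hcsup : ∀ S T : Finset (Fin m), Disjoint S T → c S + c T ≤ c (S ∪ T))
    (B Val : ℝ) (hB : 0 < B) (hVal : 0 < Val)
    (opt : ℝ) (hopt : opt = sSup {x : ℝ | ∃ S : Finset (Fin m), c S ≤ B ∧ x = v S})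
    (hge : Val ≤ opt)
    (Tstar : Finset (Fin m)) (hT1 : v Tstar ≤ Val / 2)
    (hT2 : ∀ S : Finset (Fin m), v S ≤ Val / 2 →
      v S - Val / (2 * B) * c S ≤ v Tstar - Val / (2 * B) * c Tstar) :
    Val / 8 ≤ v Tstar - Val / (2 * B) * c Tstar ∨
    ∃ e : Fin m, c {e} ≤ B ∧ Val / 8 ≤ v {e} := by
  -- the sup is attained
  set A : Set ℝ := {x : ℝ | ∃ S : Finset (Fin m), c S ≤ B ∧ x = v S} with hA
  have hAfin : A.Finite := by
    have : A ⊆ Set.range v := by rintro x ⟨S, _, rfl⟩; exact ⟨S, rfl⟩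
    exact (Set.finite_range v).subset this
  have hAne : A.Nonempty := ⟨v ∅, ∅, by rw [hc0]; exact hB.le, rfl⟩
  have hmem : sSup A ∈ A := hAne.csSup_mem hAfin
  obtain ⟨Sstar, hcS, hvS⟩ := hmem
  have hvS' : Val ≤ v Sstar := by rw [← hvS, ← hopt]; exact hge
  by_cases hsing : ∃ e ∈ Sstar, Val / 8 ≤ v {e}
  · obtain ⟨e, he, hve⟩ := hsing
    exact Or.inr ⟨e, le_trans (hcmono _ _ (Finset.singleton_subset_iff.mpr he)) hcS, hve⟩
  · push_neg at hsing
    left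
    have hpeel1 : ∃ T, T ⊆ Sstar ∧ 3 * Val / 8 < v T ∧ v T ≤ Val / 2 :=
      peel_aux v hv0 hvsub Val hVal Sstar hsing (by linarith)
    obtain ⟨T1, hT1s, hvT1, hvT1'⟩ := hpeel1
    set R := Sstar \ T1 with hR
    have hunion : T1 ∪ R = Sstar := Finset.union_sdiff_of_subset hT1s
    have hvR : Val / 2 ≤ v R := by
      have := hvsub T1 R
      rw [hunion] at this
      linarith
    obtain ⟨T2, hT2s, hvT2, hvT2'⟩ := peel_aux v hv0 hvsub Val hVal R
      (fun e he => hsing e (Finset.mem_sdiff.mp he).1) (by linarith)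
    have hdisj : Disjoint T1 T2 :=
      Finset.disjoint_left.mpr (fun a ha1 ha2 => ((Finset.mem_sdiff.mp (hT2s ha2)).2) ha1)
    have hcsum : c T1 + c T2 ≤ B := by
      calc c T1 + c T2 ≤ c (T1 ∪ T2) := hcsup _ _ hdisj
      _ ≤ c Sstar := hcmono _ _ (Finset.union_subset hT1s (hT2s.trans (Finset.sdiff_subset)))
      _ ≤ B := hcS
    have hlam : 0 < Val / (2 * B) := by positivity
    -- one of T1, T2 has c ≤ B/2
    have key : ∀ T : Finset (Fin m), 3 * Val / 8 < v T → v T ≤ Val / 2 → c T ≤ B / 2 →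
        Val / 8 ≤ v Tstar - Val / (2 * B) * c Tstar := by
      intro T ha hb hcT
      have h1 := hT2 T hb
      have h2 : Val / (2 * B) * c T ≤ Val / (2 * B) * (B / 2) :=
        mul_le_mul_of_nonneg_left hcT hlam.le
      have h3 : Val / (2 * B) * (B / 2) = Val / 4 := by field_simp; ring
      nlinarith
    rcases le_or_gt (c T1) (B / 2) with h | h
    · exact key T1 hvT1 hvT1' h
    · exact key T2 hvT2 hvT2' (by linarith [hcnn T1])
end

section
/- Let W be a finite set partitioned into G_1, …, G_m, let v : 2^W → ℝ≥0 be monotone and submodular with v(∅) = 0, let c_i : 2^{G_i} → ℝ≥0 satisfy c_i(∅) = 0 for each i, and let κ ≥ 0. Set T_0 := ∅ and, for i = 1, …, m, let D_i be any maximizer over S ⊆ G_i of v(S ∪ T_{i−1}) − v(T_{i−1}) − κ·c_i(S), and set T_i := T_{i−1} ∪ D_i. Then, writing c(O) := Σ_{i=1}^m c_i(O ∩ G_i), for every O ⊆ W one has v(T_m) − κ·c(T_m) ≥ v(O ∪ T_m) − v(T_m) − κ·c(O); in particular, 2·v(T_m) ≥ v(O) − κ·c(O). -/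
open Finset

/-- key inequality of the greedy mechanism Submod-UniBF. Let `v` be
monotone, submodular and normalized on a set `W` partitioned into `G_1, …, G_m`, let
`c_i` be normalized costs, `κ ≥ 0`, and let `T_0 = ∅`, `T_i = T_{i−1} ∪ D_i` where `D_i`
maximizes `v (S ∪ T_{i−1}) − v T_{i−1} − κ·c_i S` over `S ⊆ G_i`. Then for every
`O ⊆ W`, `v T_m − κ·c T_m ≥ v (O ∪ T_m) − v T_m − κ·c O`, and in particular
`2·v T_m ≥ v O − κ·c O`. -/
theorem stmt16 {n m : ℕ} (G : Fin m → Finset (Fin n))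
    (hdisj : ∀ i j : Fin m, i ≠ j → Disjoint (G i) (G j))
    (hcover : Finset.univ.biUnion G = (Finset.univ : Finset (Fin n)))
    (v : Finset (Fin n) → ℝ) (hv0 : v ∅ = 0)
    (hvmono : ∀ S T : Finset (Fin n), S ⊆ T → v S ≤ v T)
    (hvsubmod : ∀ S T : Finset (Fin n), v (S ∩ T) + v (S ∪ T) ≤ v S + v T)
    (c : Fin m → Finset (Fin n) → ℝ)
    (hc0 : ∀ i, c i ∅ = 0)
    (hcnn : ∀ i (S : Finset (Fin n)), S ⊆ G i → 0 ≤ c i S)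
    (κ : ℝ) (hκ : 0 ≤ κ)
    (D : Fin m → Finset (Fin n)) (T : ℕ → Finset (Fin n))
    (hT0 : T 0 = ∅)
    (hTsucc : ∀ i : Fin m, T ((i : ℕ) + 1) = T i ∪ D i)
    (hD : ∀ i : Fin m, D i ⊆ G i ∧
      ∀ S ⊆ G i, v (S ∪ T i) - v (T i) - κ * c i S ≤
        v (D i ∪ T i) - v (T i) - κ * c i (D i)) :
    ∀ O : Finset (Fin n),
      v (O ∪ T m) - v (T m) - κ * (∑ i, c i (O ∩ G i)) ≤
        v (T m) - κ * (∑ i, c i (T m ∩ G i)) ∧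
      v O - κ * (∑ i, c i (O ∩ G i)) ≤ 2 * v (T m) := by
  -- submodularity in marginal form
  have hmarg : ∀ A B X : Finset (Fin n), A ⊆ B →
      v (X ∪ B) - v B ≤ v (X ∪ A) - v A := by
    intro A B X hAB
    have h1 := hvsubmod (X ∪ A) B
    have h2 : (X ∪ A) ∪ B = X ∪ B := by
      rw [union_assoc, union_eq_right.mpr hAB]
    have h3 : A ⊆ (X ∪ A) ∩ B := subset_inter subset_union_right hAB
    have h4 := hvmono _ _ h3
    rw [h2] at h1
    linarith
  intro O
  classical
  set d : ℕ → Finset (Fin n) := fun j => if h : j < m then D ⟨j, h⟩ else ∅ with hd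
  set g : ℕ → Finset (Fin n) := fun j => if h : j < m then G ⟨j, h⟩ else ∅ with hg
  set cf : ℕ → Finset (Fin n) → ℝ := fun j S => if h : j < m then c ⟨j, h⟩ S else 0 with hcf
  -- T k is the union of d j for j < k
  have hTk : ∀ k, k ≤ m → T k = (range k).biUnion d := by
    intro k
    induction k with
    | zero => intro _; simpa using hT0
    | succ k ih =>
      intro hk
      have hkm : k < m := hk
      have hstep := hTsucc ⟨k, hkm⟩
      rw [Finset.range_add_one, Finset.biUnion_insert, ← ih (Nat.le_of_lt hkm)]
      rw [hstep]
      have : d k = D ⟨k, hkm⟩ := by simp [hd, hkm]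
      rw [this, union_comm]
  -- T is monotone up to m
  have hTsub : ∀ k, k ≤ m → T k ⊆ T m := by
    intro k hk
    rw [hTk k hk, hTk m le_rfl]
    exact biUnion_subset_biUnion_of_subset_left d (range_subset_range.mpr hk)
  -- T m ∩ G i = D i
  have hTmG : ∀ i : Fin m, T m ∩ G i = D i := by
    intro i
    ext x
    rw [hTk m le_rfl]
    simp only [mem_inter, mem_biUnion, mem_range]
    constructor
    · rintro ⟨⟨j, hj, hxj⟩, hxG⟩
      have hxGj : x ∈ G ⟨j, hj⟩ := (hD ⟨j, hj⟩).1 (by simpa [hd, hj] using hxj)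
      by_cases hji : (⟨j, hj⟩ : Fin m) = i
      · rw [← hji]; simpa [hd, hj] using hxj
      · exact absurd hxG (Finset.disjoint_left.mp (hdisj ⟨j, hj⟩ i hji) hxGj)
    · intro hx
      exact ⟨⟨i, i.isLt, by simpa [hd, i.isLt] using hx⟩, (hD i).1 hx⟩
  -- the greedy step bound, in ℕ-indexed form
  have hstep : ∀ j, j < m →
      v ((O ∩ g j) ∪ T j) - v (T j) - κ * cf j (O ∩ g j) ≤
        v (T (j + 1)) - v (T j) - κ * cf j (d j) := by
    intro j hj
    have h := (hD ⟨j, hj⟩).2 (O ∩ G ⟨j, hj⟩) inter_subset_right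
    have hT : T (j + 1) = T j ∪ D ⟨j, hj⟩ := hTsucc ⟨j, hj⟩
    simp only [hg, hd, hcf, hj, dif_pos, if_pos]
    rw [hT, union_comm (T j)]
    exact h
  -- telescoping induction
  have hmain : ∀ k, k ≤ m →
      v (T m ∪ (range k).biUnion (fun j => O ∩ g j)) - v (T m)
        - κ * ∑ j ∈ range k, cf j (O ∩ g j) ≤
      ∑ j ∈ range k, (v (T (j + 1)) - v (T j) - κ * cf j (d j)) := by
    intro k
    induction k with
    | zero => intro _; simp
    | succ k ih =>
      intro hk
      have hkm : k < m := hk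
      have IH := ih (Nat.le_of_lt hkm)
      rw [Finset.range_add_one, Finset.biUnion_insert, Finset.sum_insert notMem_range_self,
        Finset.sum_insert notMem_range_self]
      have hsub : T k ⊆ T m ∪ (range k).biUnion (fun j => O ∩ g j) :=
        (hTsub k (Nat.le_of_lt hkm)).trans subset_union_left
      have h1 : v (T m ∪ ((O ∩ g k) ∪ (range k).biUnion (fun j => O ∩ g j)))
          - v (T m ∪ (range k).biUnion (fun j => O ∩ g j)) ≤
          v ((O ∩ g k) ∪ T k) - v (T k) := by
        have := hmarg (T k) (T m ∪ (range k).biUnion (fun j => O ∩ g j)) (O ∩ g k) hsub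
        have heq : (O ∩ g k) ∪ (T m ∪ (range k).biUnion (fun j => O ∩ g j))
            = T m ∪ ((O ∩ g k) ∪ (range k).biUnion (fun j => O ∩ g j)) := by
          rw [← union_assoc, union_comm (O ∩ g k) (T m), union_assoc]
        rw [heq] at this
        exact this
      have h2 := hstep k hkm
      linarith
  -- instantiate at k = m
  have hOm : (range m).biUnion (fun j => O ∩ g j) = O := by
    ext x
    simp only [mem_biUnion, mem_range, mem_inter]
    constructor
    · rintro ⟨j, hj, hx, _⟩; exact hx
    · intro hx
      have : x ∈ Finset.univ.biUnion G := by rw [hcover]; exact mem_univ x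
      obtain ⟨i, _, hxi⟩ := mem_biUnion.mp this
      exact ⟨i, i.isLt, hx, by simpa [hg, i.isLt] using hxi⟩
  have hfin := hmain m le_rfl
  rw [hOm, union_comm (T m) O] at hfin
  -- telescoping RHS
  have htel : ∑ j ∈ range m, (v (T (j + 1)) - v (T j) - κ * cf j (d j))
      = v (T m) - κ * ∑ j ∈ range m, cf j (d j) := by
    rw [Finset.sum_sub_distrib, Finset.sum_range_sub (fun j => v (T j)), hT0, hv0,
      ← Finset.mul_sum]
    ring
  rw [htel] at hfin
  -- sums over Fin m vs range m
  have hsumO : (∑ i, c i (O ∩ G i)) = ∑ j ∈ range m, cf j (O ∩ g j) := by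
    rw [Finset.sum_range fun j => cf j (O ∩ g j)]
    apply Finset.sum_congr rfl
    intro i _
    simp [hcf, hg, i.isLt]
  have hsumT : (∑ i, c i (T m ∩ G i)) = ∑ j ∈ range m, cf j (d j) := by
    rw [Finset.sum_range fun j => cf j (d j)]
    apply Finset.sum_congr rfl
    intro i _
    rw [hTmG i]
    simp [hcf, hd, i.isLt]
  have hpart1 : v (O ∪ T m) - v (T m) - κ * (∑ i, c i (O ∩ G i)) ≤
      v (T m) - κ * (∑ i, c i (T m ∩ G i)) := by
    rw [hsumO, hsumT]; linarith
  refine ⟨hpart1, ?_⟩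
  have hmonoO : v O ≤ v (O ∪ T m) := hvmono _ _ subset_union_left
  have hcT : 0 ≤ ∑ i, c i (T m ∩ G i) := by
    apply Finset.sum_nonneg
    intro i _
    rw [hTmG i]
    exact hcnn i (D i) (hD i).1
  nlinarith [mul_nonneg hκ hcT]
end

section
/- Let U be a finite set, let v : 2^U → ℝ≥0 be subadditive with v(∅) = 0, let c : 2^U → ℝ≥0 be superadditive with c(∅) = 0, let B > 0, and assume c({e}) ≤ B for every e ∈ U. Set OPT := max{v(S) : S ⊆ U, c(S) ≤ B}, κ := 2·OPT/(3B), and let S* be any maximizer of v(S) − κ·c(S) over all S ⊆ U. Then at least one of the following holds: (i) there exists e ∈ U with v({e}) ≥ OPT/3; or (ii) there exists T ⊆ S* with c(T) ≤ B and v(T) ≥ OPT/3. -/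
open Finset

/-- core of the polytime 3-approximation for `OPTalg`. Let `v` be
subadditive and normalized, `c` superadditive and normalized, `B > 0`, with
`c {e} ≤ B` for every item. Let `OPT = max{v S : c S ≤ B}`, `κ = 2·OPT/(3B)`, and let
`S*` maximize `v S − κ·c S` over all `S ⊆ U`. Then either some single item has value at
least `OPT/3`, or some `T ⊆ S*` has `c T ≤ B` and `v T ≥ OPT/3`. -/
theorem stmt18 {n : ℕ} (v c : Finset (Fin n) → ℝ)
    (hv0 : v ∅ = 0) (hvnn : ∀ S, 0 ≤ v S)
    (hvsub : ∀ S T : Finset (Fin n), v (S ∪ T) ≤ v S + v T)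
    (hc0 : c ∅ = 0) (hcnn : ∀ S, 0 ≤ c S)
    (hcsup : ∀ S T : Finset (Fin n), Disjoint S T → c S + c T ≤ c (S ∪ T))
    (B : ℝ) (hB : 0 < B) (hnob : ∀ e : Fin n, c {e} ≤ B)
    (OPT : ℝ) (hOPT : OPT = sSup {x : ℝ | ∃ S : Finset (Fin n), c S ≤ B ∧ x = v S})
    (κ : ℝ) (hκ : κ = 2 * OPT / (3 * B))
    (Sstar : Finset (Fin n))
    (hSstar : ∀ S : Finset (Fin n), v S - κ * c S ≤ v Sstar - κ * c Sstar) :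
    (∃ e : Fin n, OPT / 3 ≤ v {e}) ∨
    (∃ T ⊆ Sstar, c T ≤ B ∧ OPT / 3 ≤ v T) := by
  set Ω : Set ℝ := {x : ℝ | ∃ S : Finset (Fin n), c S ≤ B ∧ x = v S} with hΩ
  have hfin : Ω.Finite := by
    apply (Set.finite_range v).subset
    rintro x ⟨S, -, rfl⟩
    exact ⟨S, rfl⟩
  have hne : Ω.Nonempty := ⟨0, ∅, by simpa [hc0] using hB.le, hv0.symm⟩
  have hub : ∀ S : Finset (Fin n), c S ≤ B → v S ≤ OPT := by
    intro S hS
    rw [hOPT]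
    exact le_csSup hfin.bddAbove ⟨S, hS, rfl⟩
  have hOPTnn : 0 ≤ OPT := by
    have := hub ∅ (by simpa [hc0] using hB.le)
    have h0 := hub ∅ (by simpa [hc0] using hB.le)
    simpa [hv0] using h0
  have hmem : ∃ S0 : Finset (Fin n), c S0 ≤ B ∧ OPT = v S0 := by
    have := hne.csSup_mem hfin
    rw [← hOPT] at this
    exact this
  obtain ⟨S0, hS0B, hS0v⟩ := hmem
  rcases eq_or_lt_of_le hOPTnn with h0 | hOPTpos
  · exact Or.inr ⟨∅, empty_subset _, by simpa [hc0] using hB.le, by simp [hv0, ← h0]⟩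
  have hκpos : 0 < κ := by
    rw [hκ]; positivity
  have hκB : κ * B = 2 * OPT / 3 := by
    rw [hκ]; field_simp
  -- monotonicity-like facts not needed; proceed by contradiction
  by_contra hcon
  push_neg at hcon
  obtain ⟨h1, h2⟩ := hcon
  -- key : every subset A of Sstar satisfies v A < OPT/3 + κ * c A
  have key : ∀ A : Finset (Fin n), A ⊆ Sstar → v A < OPT / 3 + κ * c A := by
    intro A
    induction A using Finset.strongInduction with
    | _ A ih =>
      intro hA
      by_cases hcA : c A ≤ B
      · have := h2 A hA hcA
        have hnn : 0 ≤ κ * c A := mul_nonneg hκpos.le (hcnn A)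
        linarith
      · push_neg at hcA
        -- pick a maximum-cardinality feasible subset T of A
        set F : Finset (Finset (Fin n)) := A.powerset.filter (fun T => c T ≤ B) with hF
        have hFne : F.Nonempty := ⟨∅, by simp [hF, hc0, hB.le]⟩
        obtain ⟨T, hTF, hTmax⟩ := F.exists_max_image Finset.card hFne
        have hTA : T ⊆ A := by
          have := hTF; rw [hF, Finset.mem_filter, Finset.mem_powerset] at this
          exact this.1
        have hTB : c T ≤ B := by
          have := hTF; rw [hF, Finset.mem_filter] at this
          exact this.2
        have hTne : T ≠ A := by
          rintro rfl; exact absurd hTB (not_le.2 hcA)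
        obtain ⟨e, heA, heT⟩ : ∃ e, e ∈ A ∧ e ∉ T := by
          by_contra h
          push_neg at h
          exact hTne (Finset.Subset.antisymm hTA (fun x hx => h x hx))
        set W : Finset (Fin n) := insert e T with hW
        have hWA : W ⊆ A := Finset.insert_subset heA hTA
        have hWB : B < c W := by
          by_contra h
          push_neg at h
          have hWF : W ∈ F := by
            rw [hF, Finset.mem_filter, Finset.mem_powerset]; exact ⟨hWA, h⟩
          have := hTmax W hWF
          rw [hW, Finset.card_insert_of_notMem heT] at this
          omega
        have hWne : W.Nonempty := ⟨e, Finset.mem_insert_self e T⟩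
        have hssub : A \ W ⊂ A := Finset.sdiff_ssubset hWA hWne
        have ihAW : v (A \ W) < OPT / 3 + κ * c (A \ W) :=
          ih (A \ W) hssub ((Finset.sdiff_subset).trans hA)
        -- v W < 2 OPT / 3
        have hvW : v W < 2 * OPT / 3 := by
          have hsub : v W ≤ v {e} + v T := by
            have : W = {e} ∪ T := by rw [hW]; rfl
            rw [this]; exact hvsub {e} T
          have he' : v {e} < OPT / 3 := h1 e
          have hT' : v T < OPT / 3 := h2 T (hTA.trans hA) hTB
          linarith
        -- cost splits
        have hcsplit : c W + c (A \ W) ≤ c A := by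
          have hdisj : Disjoint W (A \ W) := Finset.disjoint_sdiff
          have := hcsup W (A \ W) hdisj
          rwa [Finset.union_sdiff_of_subset hWA] at this
        have hvsplit : v A ≤ v W + v (A \ W) := by
          have : A = W ∪ (A \ W) := (Finset.union_sdiff_of_subset hWA).symm
          calc v A = v (W ∪ (A \ W)) := by rw [← this]
            _ ≤ v W + v (A \ W) := hvsub _ _
        have hκW : 2 * OPT / 3 < κ * c W := by
          have := mul_lt_mul_of_pos_left hWB hκpos
          linarith [hκB ▸ this]
        have hκW' : κ * c W + κ * c (A \ W) ≤ κ * c A := by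
          have := mul_le_mul_of_nonneg_left hcsplit hκpos.le
          linarith [this]
        nlinarith [mul_le_mul_of_nonneg_left hcsplit hκpos.le]
  have hSstarBound := key Sstar (subset_refl _)
  have hmain := hSstar S0
  have hκS0 : κ * c S0 ≤ κ * B := mul_le_mul_of_nonneg_left hS0B hκpos.le
  -- OPT - κ*B ≤ v Sstar - κ * c Sstar < OPT/3 ; but OPT - κ*B = OPT/3
  rw [← hS0v] at hmain
  linarith
end
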